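/- arXiv:1405.7627 — 11 statements merged into one kernel-verified Lean document; each statement's English description precedes it below -/
import Mathlib

section
/- Let x : I → ℝ³ \ {0} be C² satisfying the central-force system ẍ = ∂/∂x [ (h(|x|)/2)(L²/|x|² + μ) ] with x × ẋ = L⃗ constant, |L⃗| = |L|. Then the quantity ε := ṙ²/2 + (1 − h(r))L²/(2r²) − h(r)μ/2, where r = |x|, is constant along the trajectory. -/
/-!
With `V ρ = h ρ / 2 * (L² / ρ² + μ)` the equation of motion reads `ẍ = V'(|x|) x / |x|`, so the
energy `|ẋ|² / 2 - V(|x|)` has zero derivative. Lagrange's identity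
`|x|² |ẋ|² - (x ⬝ ẋ)² = |x × ẋ|² = L²` rewrites `|ẋ|² / 2` as `ṙ² / 2 + L² / (2 r²)`, which turns
this energy into `ε`.
-/

open Finset Matrix

section RadialMotion

variable {ι : Type*} [Fintype ι]

lemma sum_sq_pos_of_ne_zero {v : ι → ℝ} (hv : v ≠ 0) : 0 < ∑ i, v i ^ 2 := by
  obtain ⟨i, hi⟩ := Function.ne_iff.mp hv
  have hi : v i ≠ 0 := hi
  exact Finset.sum_pos' (fun j _ => sq_nonneg (v j)) ⟨i, mem_univ i, by positivity⟩

lemma hasDerivAt_sum_sq {x : ℝ → ι → ℝ} {v : ι → ℝ} {s : ℝ}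
    (hx : ∀ i, HasDerivAt (fun t => x t i) (v i) s) :
    HasDerivAt (fun t => ∑ i, x t i ^ 2) (2 * ∑ i, x s i * v i) s := by
  rw [mul_sum]
  refine HasDerivAt.fun_sum fun i _ => ?_
  exact ((hx i).fun_pow 2).congr_deriv (by simp; ring)

lemma hasDerivAt_sqrt_sum_sq {x : ℝ → ι → ℝ} {v : ι → ℝ} {s : ℝ}
    (hx : ∀ i, HasDerivAt (fun t => x t i) (v i) s) (hs : x s ≠ 0) :
    HasDerivAt (fun t => √(∑ i, x t i ^ 2))
      ((∑ i, x s i * v i) / √(∑ i, x s i ^ 2)) s := by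
  have hpos := sum_sq_pos_of_ne_zero hs
  convert (hasDerivAt_sum_sq hx).sqrt hpos.ne' using 1
  field_simp

theorem central_force_energy_eq {x : ℝ → ι → ℝ} {V : ℝ → ℝ}
    (hx : ∀ i, Differentiable ℝ fun t => x t i)
    (hx' : ∀ i, Differentiable ℝ (deriv fun t => x t i)) (hx0 : ∀ t, x t ≠ 0)
    (hV : ∀ t, DifferentiableAt ℝ V √(∑ i, x t i ^ 2))
    (ode : ∀ t i, deriv (deriv fun t => x t i) t
      = deriv V √(∑ i, x t i ^ 2) * (x t i / √(∑ i, x t i ^ 2)))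
    (s₁ s₂ : ℝ) :
    (∑ i, deriv (fun t => x t i) s₁ ^ 2) / 2 - V √(∑ i, x s₁ i ^ 2)
      = (∑ i, deriv (fun t => x t i) s₂ ^ 2) / 2 - V √(∑ i, x s₂ i ^ 2) := by
  set r : ℝ → ℝ := fun t => √(∑ i, x t i ^ 2)
  have hE : ∀ t, HasDerivAt
      (fun t => (∑ i, deriv (fun t => x t i) t ^ 2) / 2 - V (r t)) 0 t := by
    intro t
    have hr := hasDerivAt_sqrt_sum_sq (fun i => (hx i t).hasDerivAt) (hx0 t)
    have hK := hasDerivAt_sum_sq fun i => (hx' i t).hasDerivAt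
    refine ((hK.div_const 2).fun_sub ((hV t).hasDerivAt.comp t hr)).congr_deriv ?_
    simp only [ode, mul_sum, sum_div, ← sum_sub_distrib]
    exact sum_eq_zero fun i _ => by ring
  exact is_const_of_deriv_eq_zero (fun t => (hE t).differentiableAt) (fun t => (hE t).deriv)
    s₁ s₂

end RadialMotion

lemma sum_sq_mul_sum_sq_sub_sq_sum_mul (u v : Fin 3 → ℝ) :
    (∑ i, u i ^ 2) * (∑ i, v i ^ 2) - (∑ i, u i * v i) ^ 2 = ∑ i, (u ⨯₃ v) i ^ 2 := by
  have := cross_dot_cross u v u v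
  simp only [dotProduct, ← sq] at this
  simp_rw [this, mul_comm (v _) (u _)]
  ring

lemma energy_eq_kinetic_sub_potential {r p K L h μ : ℝ} (hr : r ≠ 0)
    (hL : r ^ 2 * K - p ^ 2 = L ^ 2) :
    (p / r) ^ 2 / 2 + (1 - h) * L ^ 2 / (2 * r ^ 2) - h * μ / 2
      = K / 2 - h / 2 * (L ^ 2 / r ^ 2 + μ) := by
  rw [← hL]
  field_simp
  ring

/-- For a C² solution `x` of the central-force system
`ẍ = ∂/∂x [(h(|x|)/2)(L²/|x|² + μ)]` with constant angular momentum `x × ẋ = L⃗`,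
`|L⃗| = |L|`, the quantity `ε := ṙ²/2 + (1 − h(r))L²/(2r²) − h(r)μ/2` (with `r = |x|`,
`ṙ = (x·ẋ)/|x|`) is constant along the trajectory. -/
theorem central_force_energy_conserved
    (h : ℝ → ℝ) (hh : ContDiff ℝ 1 h) (μ L : ℝ) (Lvec : Fin 3 → ℝ)
    (hLnorm : Real.sqrt (∑ i, Lvec i ^ 2) = |L|)
    (x : ℝ → Fin 3 → ℝ)
    (hx2 : ∀ i, ContDiff ℝ 2 (fun s => x s i))
    (hx0 : ∀ s, x s ≠ 0)
    (r : ℝ → ℝ) (hr : ∀ s, r s = Real.sqrt (∑ i, x s i ^ 2))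
    (ode : ∀ s, ∀ i : Fin 3, deriv (deriv (fun t => x t i)) s
      = deriv (fun ρ => h ρ / 2 * (L ^ 2 / ρ ^ 2 + μ)) (r s) * (x s i / r s))
    (ang : ∀ s,
      x s 1 * deriv (fun t => x t 2) s - x s 2 * deriv (fun t => x t 1) s = Lvec 0 ∧
      x s 2 * deriv (fun t => x t 0) s - x s 0 * deriv (fun t => x t 2) s = Lvec 1 ∧
      x s 0 * deriv (fun t => x t 1) s - x s 1 * deriv (fun t => x t 0) s = Lvec 2) :
    ∀ s₁ s₂ : ℝ,
      let rdot : ℝ → ℝ := fun s => (∑ i, x s i * deriv (fun t => x t i) s) / r s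
      let ε : ℝ → ℝ := fun s =>
        (rdot s) ^ 2 / 2 + (1 - h (r s)) * L ^ 2 / (2 * (r s) ^ 2) - h (r s) * μ / 2
      ε s₁ = ε s₂ := by
  intro s₁ s₂ rdot ε
  obtain rfl : r = fun s => √(∑ i, x s i ^ 2) := funext hr
  have hr0 : ∀ s, √(∑ i, x s i ^ 2) ≠ 0 := fun s =>
    (Real.sqrt_pos.mpr (sum_sq_pos_of_ne_zero (hx0 s))).ne'
  have hL : ∑ i, Lvec i ^ 2 = L ^ 2 := by
    rw [← sq_abs, ← hLnorm, Real.sq_sqrt (by positivity)]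
  have hε : ∀ s, ε s = (∑ i, deriv (fun t => x t i) s ^ 2) / 2
      - h √(∑ i, x s i ^ 2) / 2 * (L ^ 2 / √(∑ i, x s i ^ 2) ^ 2 + μ) := by
    intro s
    have hcross : x s ⨯₃ (fun i => deriv (fun t => x t i) s) = Lvec := by
      obtain ⟨h0, h1, h2⟩ := ang s
      ext i; fin_cases i <;> simp [cross_apply, h0, h1, h2]
    refine energy_eq_kinetic_sub_potential (hr0 s) ?_
    rw [Real.sq_sqrt (by positivity), sum_sq_mul_sum_sq_sub_sq_sum_mul, hcross, hL]
  have hV : ∀ s,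
      DifferentiableAt ℝ (fun ρ => h ρ / 2 * (L ^ 2 / ρ ^ 2 + μ)) √(∑ i, x s i ^ 2) := by
    have := hh.differentiable one_ne_zero
    intro s
    fun_prop (disch := exact pow_ne_zero 2 (hr0 s))
  rw [hε, hε]
  exact central_force_energy_eq (fun i => (hx2 i).differentiable two_ne_zero)
    (fun i => (hx2 i).differentiable_deriv_two) hx0 hV ode s₁ s₂
end

section
/- Let h₀ > 1, a₀ ≥ 0 and σ = ±1. The set of pairs (ṙ₀, E) ∈ ℝ² satisfying E² = ṙ₀² − a₀² together with the condition ((h₀−1)(E − σṙ₀) < 0 or (E = σṙ₀ ≥ 0)) is exactly the branch { (ṙ₀, E) : σṙ₀ ≥ a₀, E = ±√(ṙ₀² − a₀²) } of the hyperbola. -/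
/-!
Put `s = σ ṙ₀`, so that `ṙ₀² = s²`, and divide the first alternative by `h₀ − 1 > 0`: the
condition becomes `E < s ∨ (E = s ∧ 0 ≤ E)`. Since `E² = s² − a₀² ≤ s²`, this says exactly that
`s ≥ 0`, which for `a₀ ≥ 0` is equivalent to `s ≥ a₀`. The equation `E² = s² − a₀²` itself just
picks one of the two square roots.
-/

lemma Real.sq_eq_iff_eq_sqrt_or_eq_neg_sqrt {x y : ℝ} :
    y ^ 2 = x ↔ 0 ≤ x ∧ (y = √x ∨ y = -√x) := by
  constructor
  · rintro rfl
    exact ⟨sq_nonneg y, sq_eq_sq_iff_eq_or_eq_neg.1 (Real.sq_sqrt (sq_nonneg y)).symm⟩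
  · rintro ⟨hx, hy⟩
    rw [← Real.sq_sqrt hx]
    exact sq_eq_sq_iff_eq_or_eq_neg.2 hy

lemma lt_or_eq_and_nonneg_iff_nonneg_of_sq_le_sq {E s : ℝ} (h : E ^ 2 ≤ s ^ 2) :
    (E < s ∨ (E = s ∧ 0 ≤ E)) ↔ 0 ≤ s := by
  constructor
  · rintro (hlt | ⟨rfl, hE⟩)
    · by_contra! hs
      nlinarith
    · exact hE
  · intro hs
    rcases (abs_le_of_sq_le_sq' h hs).2.lt_or_eq with hlt | rfl
    · exact Or.inl hlt
    · exact Or.inr ⟨rfl, hs⟩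

lemma sq_eq_sq_sub_sq_and_lt_or_eq_and_nonneg_iff {a s E : ℝ} (ha : 0 ≤ a) :
    (E ^ 2 = s ^ 2 - a ^ 2 ∧ (E < s ∨ (E = s ∧ 0 ≤ E))) ↔
      (a ≤ s ∧ (E = √(s ^ 2 - a ^ 2) ∨ E = -√(s ^ 2 - a ^ 2))) := by
  constructor
  · rintro ⟨hE, hbranch⟩
    have hs : 0 ≤ s := (lt_or_eq_and_nonneg_iff_nonneg_of_sq_le_sq (by nlinarith)).1 hbranch
    have has : a ≤ s := (sq_le_sq₀ ha hs).1 (by nlinarith)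
    exact ⟨has, (Real.sq_eq_iff_eq_sqrt_or_eq_neg_sqrt.1 hE).2⟩
  · rintro ⟨has, hroot⟩
    have hnonneg : 0 ≤ s ^ 2 - a ^ 2 := sub_nonneg.2 (pow_le_pow_left₀ ha has 2)
    have hE : E ^ 2 = s ^ 2 - a ^ 2 := Real.sq_eq_iff_eq_sqrt_or_eq_neg_sqrt.2 ⟨hnonneg, hroot⟩
    exact ⟨hE, (lt_or_eq_and_nonneg_iff_nonneg_of_sq_le_sq (by nlinarith)).2 (ha.trans has)⟩

/-- For `h₀ > 1`, `a₀ ≥ 0`, `σ = ±1`: the pairs `(ṙ₀, E)` with `E² = ṙ₀² − a₀²` and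
`((h₀−1)(E − σṙ₀) < 0` or `E = σṙ₀ ≥ 0)` are exactly the branch
`{σṙ₀ ≥ a₀, E = ±√(ṙ₀² − a₀²)}` of the hyperbola. -/
theorem future_causal_branch_inside
    (h₀ a₀ σ : ℝ) (hh : 1 < h₀) (ha : 0 ≤ a₀) (hσ : σ = 1 ∨ σ = -1) :
    ∀ rdot E : ℝ,
      (E ^ 2 = rdot ^ 2 - a₀ ^ 2 ∧
        ((h₀ - 1) * (E - σ * rdot) < 0 ∨ (E = σ * rdot ∧ 0 ≤ E)))
      ↔ (a₀ ≤ σ * rdot ∧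
          (E = Real.sqrt (rdot ^ 2 - a₀ ^ 2) ∨ E = -Real.sqrt (rdot ^ 2 - a₀ ^ 2))) := by
  intro rdot E
  have hsq : rdot ^ 2 = (σ * rdot) ^ 2 := by rcases hσ with rfl | rfl <;> ring
  have hlt : (h₀ - 1) * (E - σ * rdot) < 0 ↔ E < σ * rdot :=
    (smul_neg_iff_of_pos_left (sub_pos.2 hh)).trans sub_neg
  rw [hsq, hlt]
  exact sq_eq_sq_sub_sq_and_lt_or_eq_and_nonneg_iff ha
end

section
/- For future-directed causal geodesics (μ ∈ {0,1}) in a stationary spherically symmetric Kerr-Schild spacetime, the conserved quantity ε = (E² − μ)/2 satisfies: if h₀ ≥ 1 then ε ranges over [−μ/2, ∞), and if h₀ < 1 then ε ranges over [(a₀² − μ)/2, ∞), where a₀² = |1 − h₀|(L²/r₀² + μ). Concretely: if h₀ ≥ 1, for every ε ≥ −μ/2 there is admissible initial data with that ε, and every admissible datum has ε ≥ −μ/2; analogously for h₀ < 1. -/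
/-!
Everything reduces to `σ² = 1` and `E² = 2ε + μ`. For `h₀ ≥ 1` nothing constrains `E` beyond
`E² ≥ 0`, and any `E ≥ 0` is realised by `ṙ₀ = σ √(E² + a₀²)` (or `ṙ₀ = σ E` when `h₀ = 1`).
For `h₀ < 1` the condition `a₀ ≤ σ E` with `a₀ ≥ 0` is equivalent to `E² ≥ a₀²`, and any such
`E²` is realised by the energy `σ |E|` together with `ṙ₀ = √(E² − a₀²)`.
-/

open Real

/-- The admissibility conditions of Proposition 3.4 on initial data `(ṙ₀, E)`. -/
def Admissible (σ h₀ a₀ rdot E : ℝ) : Prop :=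
  (1 < h₀ → a₀ ≤ σ * rdot ∧
    (E = √(rdot ^ 2 - a₀ ^ 2) ∨ E = -√(rdot ^ 2 - a₀ ^ 2))) ∧
  (h₀ < 1 → a₀ ≤ σ * E ∧
    (rdot = √(E ^ 2 - a₀ ^ 2) ∨ rdot = -√(E ^ 2 - a₀ ^ 2))) ∧
  (h₀ = 1 → 0 ≤ σ * rdot ∧ E = σ * rdot)

section Admissible

variable {σ h₀ a₀ rdot E : ℝ}

lemma mul_mul_cancel_of_sq_eq_one (hσ : σ ^ 2 = 1) (x : ℝ) : σ * (σ * x) = x := by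
  rw [← mul_assoc, ← sq, hσ, one_mul]

lemma Admissible.sq_le_sq_of_lt_one (hσ : σ ^ 2 = 1) (ha₀ : 0 ≤ a₀)
    (h : Admissible σ h₀ a₀ rdot E) (hh : h₀ < 1) : a₀ ^ 2 ≤ E ^ 2 :=
  calc a₀ ^ 2 ≤ (σ * E) ^ 2 := pow_le_pow_left₀ ha₀ (h.2.1 hh).1 2
    _ = E ^ 2 := by rw [mul_pow, hσ, one_mul]

lemma admissible_of_one_lt (hσ : σ ^ 2 = 1) (hh : 1 < h₀) (hE : 0 ≤ E) :
    Admissible σ h₀ a₀ (σ * √(E ^ 2 + a₀ ^ 2)) E := by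
  have hrdot : (σ * √(E ^ 2 + a₀ ^ 2)) ^ 2 = E ^ 2 + a₀ ^ 2 := by
    rw [mul_pow, hσ, one_mul, sq_sqrt (by positivity)]
  refine ⟨fun _ => ⟨?_, Or.inl ?_⟩, fun h => absurd h hh.not_gt, fun h => absurd h hh.ne'⟩
  · rw [mul_mul_cancel_of_sq_eq_one hσ]
    exact le_sqrt_of_sq_le (le_add_of_nonneg_left (sq_nonneg E))
  · rw [hrdot, add_sub_cancel_right, sqrt_sq hE]

lemma admissible_of_eq_one (hσ : σ ^ 2 = 1) (hE : 0 ≤ E) : Admissible σ 1 a₀ (σ * E) E := by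
  rw [Admissible, mul_mul_cancel_of_sq_eq_one hσ]
  exact ⟨fun h => absurd h (lt_irrefl 1), fun h => absurd h (lt_irrefl 1), fun _ => ⟨hE, rfl⟩⟩

lemma exists_admissible_of_one_le (hσ : σ ^ 2 = 1) (hh : 1 ≤ h₀) (hE : 0 ≤ E) :
    ∃ rdot, Admissible σ h₀ a₀ rdot E := by
  rcases hh.lt_or_eq with hh | rfl
  · exact ⟨_, admissible_of_one_lt hσ hh hE⟩
  · exact ⟨_, admissible_of_eq_one hσ hE⟩

lemma admissible_of_lt_one (hσ : σ ^ 2 = 1) (hh : h₀ < 1) (hE : 0 ≤ E) (ha : a₀ ^ 2 ≤ E ^ 2) :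
    Admissible σ h₀ a₀ √((σ * E) ^ 2 - a₀ ^ 2) (σ * E) := by
  refine ⟨fun h => absurd h hh.not_gt, fun _ => ⟨?_, Or.inl rfl⟩, fun h => absurd h hh.ne⟩
  rw [mul_mul_cancel_of_sq_eq_one hσ, ← sqrt_sq hE]
  exact le_sqrt_of_sq_le ha

end Admissible

lemma sq_sqrt_sub_half {ε μ : ℝ} (hε : 0 ≤ 2 * ε + μ) : (√(2 * ε + μ) ^ 2 - μ) / 2 = ε := by
  rw [sq_sqrt hε]; ring

theorem epsilon_range_general
    (σ μ r₀ L h₀ a₀ : ℝ) (hσ : σ = 1 ∨ σ = -1)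
    (ha₀ : a₀ = Real.sqrt (|1 - h₀| * (L ^ 2 / r₀ ^ 2 + μ))) :
    let Adm : ℝ → ℝ → Prop := fun rdot E =>
      (1 < h₀ → a₀ ≤ σ * rdot ∧
        (E = Real.sqrt (rdot ^ 2 - a₀ ^ 2) ∨ E = -Real.sqrt (rdot ^ 2 - a₀ ^ 2))) ∧
      (h₀ < 1 → a₀ ≤ σ * E ∧
        (rdot = Real.sqrt (E ^ 2 - a₀ ^ 2) ∨ rdot = -Real.sqrt (E ^ 2 - a₀ ^ 2))) ∧
      (h₀ = 1 → 0 ≤ σ * rdot ∧ E = σ * rdot)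
    (1 ≤ h₀ →
      (∀ rdot E : ℝ, Adm rdot E → -μ / 2 ≤ (E ^ 2 - μ) / 2) ∧
      (∀ ε : ℝ, -μ / 2 ≤ ε → ∃ rdot E : ℝ, Adm rdot E ∧ (E ^ 2 - μ) / 2 = ε)) ∧
    (h₀ < 1 →
      (∀ rdot E : ℝ, Adm rdot E → (a₀ ^ 2 - μ) / 2 ≤ (E ^ 2 - μ) / 2) ∧
      (∀ ε : ℝ, (a₀ ^ 2 - μ) / 2 ≤ ε → ∃ rdot E : ℝ, Adm rdot E ∧ (E ^ 2 - μ) / 2 = ε)) := by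
  intro Adm
  have hσ : σ ^ 2 = 1 := sq_eq_one_iff.2 hσ
  have ha₀ : 0 ≤ a₀ := ha₀ ▸ sqrt_nonneg _
  refine ⟨fun hh => ⟨fun _ E _ => by linarith [sq_nonneg E], fun ε hε => ?_⟩,
    fun hh => ⟨fun _ E h => by linarith [Admissible.sq_le_sq_of_lt_one hσ ha₀ h hh], fun ε hε => ?_⟩⟩
  · have hε : 0 ≤ 2 * ε + μ := by linarith
    obtain ⟨rdot, h⟩ := exists_admissible_of_one_le (a₀ := a₀) hσ hh (sqrt_nonneg (2 * ε + μ))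
    exact ⟨rdot, _, h, sq_sqrt_sub_half hε⟩
  · have hε' : 0 ≤ 2 * ε + μ := by linarith [sq_nonneg a₀]
    have ha : a₀ ^ 2 ≤ √(2 * ε + μ) ^ 2 := by rw [sq_sqrt hε']; linarith
    refine ⟨_, _, admissible_of_lt_one hσ hh (sqrt_nonneg _) ha, ?_⟩
    rw [mul_pow, hσ, one_mul, sq_sqrt_sub_half hε']

/-- Range of the conserved quantity `ε = (E² − μ)/2` over admissible initial data of
future-directed causal geodesics (μ ∈ {0,1}): for `h₀ ≥ 1`, `ε` ranges over `[−μ/2, ∞)`;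
for `h₀ < 1`, `ε` ranges over `[(a₀² − μ)/2, ∞)`, where `a₀² = |1 − h₀|(L²/r₀² + μ)`. -/
theorem epsilon_range
    (σ μ r₀ L h₀ a₀ : ℝ) (hσ : σ = 1 ∨ σ = -1) (hμ : μ = 0 ∨ μ = 1) (hr₀ : 0 < r₀)
    (ha₀ : a₀ = Real.sqrt (|1 - h₀| * (L ^ 2 / r₀ ^ 2 + μ))) :
    let Adm : ℝ → ℝ → Prop := fun rdot E =>
      (1 < h₀ → a₀ ≤ σ * rdot ∧
        (E = Real.sqrt (rdot ^ 2 - a₀ ^ 2) ∨ E = -Real.sqrt (rdot ^ 2 - a₀ ^ 2))) ∧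
      (h₀ < 1 → a₀ ≤ σ * E ∧
        (rdot = Real.sqrt (E ^ 2 - a₀ ^ 2) ∨ rdot = -Real.sqrt (E ^ 2 - a₀ ^ 2))) ∧
      (h₀ = 1 → 0 ≤ σ * rdot ∧ E = σ * rdot)
    (1 ≤ h₀ →
      (∀ rdot E : ℝ, Adm rdot E → -μ / 2 ≤ (E ^ 2 - μ) / 2) ∧
      (∀ ε : ℝ, -μ / 2 ≤ ε → ∃ rdot E : ℝ, Adm rdot E ∧ (E ^ 2 - μ) / 2 = ε)) ∧
    (h₀ < 1 →
      (∀ rdot E : ℝ, Adm rdot E → (a₀ ^ 2 - μ) / 2 ≤ (E ^ 2 - μ) / 2) ∧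
      (∀ ε : ℝ, (a₀ ^ 2 - μ) / 2 ≤ ε → ∃ rdot E : ℝ, Adm rdot E ∧ (E ^ 2 - μ) / 2 = ε)) :=
  epsilon_range_general σ μ r₀ L h₀ a₀ hσ ha₀
end

section
/- The dynamical system r' = ru, θ' = v, v' = −(β+1)uv, u' = r^{2−2β}Λ(r) − βu² + v², with Λ(r) = −(1/r)V'(r), admits the two first integrals L = v r^{β+1} and ε = (1/2) r^{2β}(u² + v²) + V(r); i.e. both quantities are constant along any solution. -/
/-!
Both identities are derivative computations driven by `r' = r u`: it gives
`(r ^ p)' = p u r ^ p` for every real exponent `p`. For `L` the two contributions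
`(β + 1) u L` and `-(β + 1) u L` cancel. For `ε` the kinetic part has derivative
`u r ^ {2β} r ^ {2 - 2β} Λ(r) = u r² Λ(r)`, while `(V ∘ r)' = V'(r) r u = -u r² Λ(r)`.
-/

open Real

theorem eq_of_forall_hasDerivAt_zero {𝕜 G : Type*} [RCLike 𝕜] [NormedAddCommGroup G]
    [NormedSpace 𝕜 G] {f : 𝕜 → G} (hf : ∀ x, HasDerivAt f 0 x) (x y : 𝕜) : f x = f y :=
  is_const_of_deriv_eq_zero (fun x => (hf x).differentiableAt) (fun x => (hf x).deriv) x y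

section McGehee

variable {r u v : ℝ → ℝ} {β s : ℝ}

theorem hasDerivAt_rpow_of_hasDerivAt_mul (hr0 : 0 < r s) (hr : HasDerivAt r (r s * u s) s)
    (p : ℝ) : HasDerivAt (fun t => r t ^ p) (p * u s * r s ^ p) s := by
  refine (hr.rpow_const (Or.inl hr0.ne')).congr_deriv ?_
  rw [rpow_sub_one hr0.ne']
  field_simp

theorem hasDerivAt_angularMomentum (hr0 : 0 < r s) (hr : HasDerivAt r (r s * u s) s)
    (hv : HasDerivAt v (-(β + 1) * u s * v s) s) :
    HasDerivAt (fun t => v t * r t ^ (β + 1)) 0 s :=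
  (hv.mul (hasDerivAt_rpow_of_hasDerivAt_mul hr0 hr (β + 1))).congr_deriv (by ring)

theorem hasDerivAt_energy {V V' Λ : ℝ → ℝ} (hr0 : 0 < r s)
    (hr : HasDerivAt r (r s * u s) s) (hv : HasDerivAt v (-(β + 1) * u s * v s) s)
    (hu : HasDerivAt u (r s ^ (2 - 2 * β) * Λ (r s) - β * u s ^ 2 + v s ^ 2) s)
    (hV : HasDerivAt V (V' (r s)) (r s)) (hΛ : Λ (r s) = -V' (r s) / r s) :
    HasDerivAt (fun t => 1 / 2 * r t ^ (2 * β) * (u t ^ 2 + v t ^ 2) + V (r t)) 0 s := by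
  have hkin := ((hasDerivAt_rpow_of_hasDerivAt_mul hr0 hr (2 * β)).const_mul (1 / 2 : ℝ)).mul
    ((hu.pow 2).add (hv.pow 2))
  have hpot := hV.comp s hr
  have hsq : r s ^ (2 * β) * r s ^ (2 - 2 * β) = r s ^ 2 := by
    rw [← rpow_add hr0, ← rpow_natCast]
    norm_num
  have hV' : V' (r s) = -(r s * Λ (r s)) := by
    rw [hΛ]
    field_simp
  refine (hkin.add hpot).congr_deriv ?_
  simp only [Pi.add_apply, Pi.pow_apply, Nat.cast_ofNat, hV']
  linear_combination u s * Λ (r s) * hsq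

end McGehee

theorem mcgehee_first_integrals_general
    (a b β : ℝ) (ha : 0 < a)
    (V V' Λ : ℝ → ℝ)
    (hV : ∀ ρ ∈ Set.Ioo a b, HasDerivAt V (V' ρ) ρ)
    (hΛ : ∀ ρ, Λ ρ = -(V' ρ) / ρ)
    (r θ u v : ℝ → ℝ)
    (hrange : ∀ s, r s ∈ Set.Ioo a b)
    (hsys : ∀ s, HasDerivAt r (r s * u s) s ∧ HasDerivAt θ (v s) s ∧
      HasDerivAt v (-(β + 1) * u s * v s) s ∧
      HasDerivAt u (r s ^ (2 - 2 * β) * Λ (r s) - β * (u s) ^ 2 + (v s) ^ 2) s) :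
    ∀ s₁ s₂ : ℝ,
      v s₁ * r s₁ ^ (β + 1) = v s₂ * r s₂ ^ (β + 1) ∧
      (1 / 2) * r s₁ ^ (2 * β) * ((u s₁) ^ 2 + (v s₁) ^ 2) + V (r s₁)
        = (1 / 2) * r s₂ ^ (2 * β) * ((u s₂) ^ 2 + (v s₂) ^ 2) + V (r s₂) := by
  have hr0 (s : ℝ) : 0 < r s := ha.trans (hrange s).1
  intro s₁ s₂
  exact ⟨eq_of_forall_hasDerivAt_zero
      (fun s => hasDerivAt_angularMomentum (hr0 s) (hsys s).1 (hsys s).2.2.1) s₁ s₂,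
    eq_of_forall_hasDerivAt_zero (fun s => hasDerivAt_energy (hr0 s) (hsys s).1 (hsys s).2.2.1
      (hsys s).2.2.2 (hV _ (hrange s)) (hΛ _)) s₁ s₂⟩

/-- The McGehee-transformed system `r' = ru, θ' = v, v' = −(β+1)uv,
`u' = r^{2−2β}Λ(r) − βu² + v²` (with `Λ(r) = −V'(r)/r`) admits the two first integrals
`L = v r^{β+1}` and `ε = (1/2) r^{2β}(u² + v²) + V(r)`. -/
theorem mcgehee_first_integrals
    (a b β : ℝ) (ha : 0 < a) (hab : a < b)
    (V V' Λ : ℝ → ℝ)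
    (hV : ∀ ρ ∈ Set.Ioo a b, HasDerivAt V (V' ρ) ρ)
    (hΛ : ∀ ρ, Λ ρ = -(V' ρ) / ρ)
    (r θ u v : ℝ → ℝ)
    (hrange : ∀ s, r s ∈ Set.Ioo a b)
    (hsys : ∀ s, HasDerivAt r (r s * u s) s ∧ HasDerivAt θ (v s) s ∧
      HasDerivAt v (-(β + 1) * u s * v s) s ∧
      HasDerivAt u (r s ^ (2 - 2 * β) * Λ (r s) - β * (u s) ^ 2 + (v s) ^ 2) s) :
    ∀ s₁ s₂ : ℝ,
      v s₁ * r s₁ ^ (β + 1) = v s₂ * r s₂ ^ (β + 1) ∧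
      (1 / 2) * r s₁ ^ (2 * β) * ((u s₁) ^ 2 + (v s₁) ^ 2) + V (r s₁)
        = (1 / 2) * r s₂ ^ (2 * β) * ((u s₂) ^ 2 + (v s₂) ^ 2) + V (r s₂) :=
  mcgehee_first_integrals_general a b β ha V V' Λ hV hΛ r θ u v hrange hsys
end

section
/- Suppose there is γ > 0 such that f(r) := r^γ V(r) extends to a C¹ function on [0,b). Then for any β ≤ −γ/2 the right-hand side of the McGehee-transformed system r' = ru, θ' = v, v' = −(β+1)uv, u' = r^{2−2β}Λ(r) − βu² + v² (where Λ(r) = γ f(r) r^{−2−γ} − f'(r) r^{−1−γ}) extends continuously to r = 0, i.e. to [0,b) × S¹ × ℝ × ℝ. -/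
/-! Multiplying out, `r^(2-2β) Λ(r) = γ f(r) r^(-2β-γ) - f'(r) r^(1-2β-γ)`. For `β ≤ -γ/2` both
exponents are nonnegative, so this expression is continuous down to `r = 0`, while every other
component of the vector field is polynomial. -/

open Set

namespace McGehee

/-- Coordinates `p = (r, θ, u, v)`; the term `r^(2-2β) Λ(r)` of `u'` is written through `f` and `f'`. -/
noncomputable def regularizedField (γ β : ℝ) (f f' : ℝ → ℝ) (p : ℝ × ℝ × ℝ × ℝ) :
    ℝ × ℝ × ℝ × ℝ :=
  (p.1 * p.2.2.1, p.2.2.2,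
    γ * f p.1 * p.1 ^ (-2 * β - γ) - f' p.1 * p.1 ^ (1 - 2 * β - γ)
      - β * p.2.2.1 ^ 2 + p.2.2.2 ^ 2,
    -(β + 1) * p.2.2.1 * p.2.2.2)

theorem rpow_two_sub_mul_lambda {r : ℝ} (hr : 0 < r) (γ β c d : ℝ) :
    r ^ (2 - 2 * β) * (γ * c * r ^ (-2 - γ) - d * r ^ (-1 - γ)) =
      γ * c * r ^ (-2 * β - γ) - d * r ^ (1 - 2 * β - γ) := by
  rw [show -2 * β - γ = (2 - 2 * β) + (-2 - γ) by ring,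
    show 1 - 2 * β - γ = (2 - 2 * β) + (-1 - γ) by ring,
    Real.rpow_add hr, Real.rpow_add hr]
  ring

theorem regularizedField_eq {γ β : ℝ} {f f' Λ : ℝ → ℝ} {p : ℝ × ℝ × ℝ × ℝ} (hr : 0 < p.1)
    (hΛ : Λ p.1 = γ * f p.1 * p.1 ^ (-2 - γ) - f' p.1 * p.1 ^ (-1 - γ)) :
    regularizedField γ β f f' p = (p.1 * p.2.2.1, p.2.2.2,
      p.1 ^ (2 - 2 * β) * Λ p.1 - β * p.2.2.1 ^ 2 + p.2.2.2 ^ 2,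
      -(β + 1) * p.2.2.1 * p.2.2.2) := by
  rw [hΛ, rpow_two_sub_mul_lambda hr]
  rfl

theorem continuousOn_regularizedField {γ β : ℝ} {f f' : ℝ → ℝ} {s : Set ℝ}
    (hf : ContinuousOn f s) (hf' : ContinuousOn f' s) (hβ : 2 * β + γ ≤ 0) :
    ContinuousOn (regularizedField γ β f f') {p | p.1 ∈ s} := by
  have hfst : MapsTo (fun p : ℝ × ℝ × ℝ × ℝ => p.1) {p | p.1 ∈ s} s := fun _ hp => hp
  have hpow₀ := Real.continuous_rpow_const (q := -2 * β - γ) (by linarith)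
  have hpow₁ := Real.continuous_rpow_const (q := 1 - 2 * β - γ) (by linarith)
  unfold regularizedField
  fun_prop (disch := assumption)

end McGehee

open McGehee in
theorem mcgehee_rhs_continuous_extension_general
    (b γ β : ℝ) (hβ : β ≤ -γ / 2)
    (f f' Λ : ℝ → ℝ)
    (hf : ∀ ρ ∈ Set.Ico 0 b, HasDerivWithinAt f (f' ρ) (Set.Ico 0 b) ρ)
    (hf' : ContinuousOn f' (Set.Ico 0 b))
    (hΛ : ∀ ρ ∈ Set.Ioo 0 b, Λ ρ = γ * f ρ * ρ ^ (-2 - γ) - f' ρ * ρ ^ (-1 - γ)) :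
    ∃ G : ℝ × ℝ × ℝ × ℝ → ℝ × ℝ × ℝ × ℝ,
      ContinuousOn G {p : ℝ × ℝ × ℝ × ℝ | p.1 ∈ Set.Ico 0 b} ∧
      ∀ p : ℝ × ℝ × ℝ × ℝ, p.1 ∈ Set.Ioo 0 b →
        G p = (p.1 * p.2.2.1, p.2.2.2,
          p.1 ^ (2 - 2 * β) * Λ p.1 - β * p.2.2.1 ^ 2 + p.2.2.2 ^ 2,
          -(β + 1) * p.2.2.1 * p.2.2.2) := by
  refine ⟨regularizedField γ β f f', ?_, fun p hp => regularizedField_eq hp.1 (hΛ p.1 hp)⟩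
  exact continuousOn_regularizedField (fun ρ hρ => (hf ρ hρ).continuousWithinAt) hf'
    (by linarith)

/-- If `f(r) := r^γ V(r)` (γ > 0) extends to a C¹ function on `[0,b)`, then for any
`β ≤ −γ/2` the right-hand side of the McGehee-transformed system
`r' = ru, θ' = v, v' = −(β+1)uv, u' = r^{2−2β}Λ(r) − βu² + v²`
(with `Λ(r) = γ f(r) r^{−2−γ} − f'(r) r^{−1−γ}`) extends continuously to `r = 0`. -/
theorem mcgehee_rhs_continuous_extension
    (b γ β : ℝ) (hb : 0 < b) (hγ : 0 < γ) (hβ : β ≤ -γ / 2)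
    (V f f' Λ : ℝ → ℝ)
    (hf : ∀ ρ ∈ Set.Ico 0 b, HasDerivWithinAt f (f' ρ) (Set.Ico 0 b) ρ)
    (hf' : ContinuousOn f' (Set.Ico 0 b))
    (hfV : ∀ ρ ∈ Set.Ioo 0 b, f ρ = ρ ^ γ * V ρ)
    (hΛ : ∀ ρ ∈ Set.Ioo 0 b, Λ ρ = γ * f ρ * ρ ^ (-2 - γ) - f' ρ * ρ ^ (-1 - γ)) :
    ∃ G : ℝ × ℝ × ℝ × ℝ → ℝ × ℝ × ℝ × ℝ,
      ContinuousOn G {p : ℝ × ℝ × ℝ × ℝ | p.1 ∈ Set.Ico 0 b} ∧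
      ∀ p : ℝ × ℝ × ℝ × ℝ, p.1 ∈ Set.Ioo 0 b →
        G p = (p.1 * p.2.2.1, p.2.2.2,
          p.1 ^ (2 - 2 * β) * Λ p.1 - β * p.2.2.1 ^ 2 + p.2.2.2 ^ 2,
          -(β + 1) * p.2.2.1 * p.2.2.2) :=
  mcgehee_rhs_continuous_extension_general b γ β hβ f f' Λ hf hf' hΛ
end

section
/- Substituting the first integral v = L r^{−(β+1)} into the McGehee-transformed system yields the reduced system r' = ru, u' = r^{−2(β+1)}(L² + r⁴Λ(r)) − βu², θ' = L r^{−(β+1)}, which admits the first integral ε = L²/(2r²) + (1/2)u² r^{2β} + V(r). Moreover, solutions of the full system with angular momentum L project to solutions of the reduced system, and conversely. -/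
/-!
On a solution, `v r^{β+1}` is the constant `L`, so `v = L r^{-(β+1)}`; this expression satisfies
`v' = -(β+1) u v` automatically once `r' = r u`, and substituting it into `u'` turns
`r^{2-2β} Λ + v²` into `r^{-2(β+1)} (L² + r⁴ Λ)`. Along the reduced flow the derivative of `ε` is
`u (-L²/r² + r^{2β}(u' + β u²) + r V'(r))`, and `r^{2β} r^{-2(β+1)} = r^{-2}` together with
`V'(r) = -r Λ(r)` makes the bracket vanish.
-/

open Real

theorem eq_mul_rpow_neg_of_mul_rpow_eq {ρ v p L : ℝ} (hρ : 0 < ρ) (h : v * ρ ^ p = L) :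
    v = L * ρ ^ (-p) := by
  rw [← h, rpow_neg hρ.le, mul_assoc, mul_inv_cancel₀ (rpow_pos_of_pos hρ p).ne', mul_one]

theorem HasDerivAt.rpow_const_of_eq_mul {r u : ℝ → ℝ} {s : ℝ} (p : ℝ)
    (hr : HasDerivAt r (r s * u s) s) (hpos : 0 < r s) :
    HasDerivAt (fun t => r t ^ p) (p * u s * r s ^ p) s := by
  refine (hr.rpow_const (p := p) (Or.inl hpos.ne')).congr_deriv ?_
  rw [rpow_sub hpos, rpow_one]
  field_simp

noncomputable section

namespace McGehee

variable (β L : ℝ) (Λ V : ℝ → ℝ)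

def fullAccel (ρ u v : ℝ) : ℝ := ρ ^ (2 - 2 * β) * Λ ρ - β * u ^ 2 + v ^ 2

def reducedAccel (ρ u : ℝ) : ℝ := ρ ^ (-2 * (β + 1)) * (L ^ 2 + ρ ^ 4 * Λ ρ) - β * u ^ 2

def reducedEnergy (ρ u : ℝ) : ℝ := L ^ 2 / (2 * ρ ^ 2) + (1 / 2) * u ^ 2 * ρ ^ (2 * β) + V ρ

def IsFullSolution (r θ u v : ℝ → ℝ) : Prop :=
  ∀ s, HasDerivAt r (r s * u s) s ∧ HasDerivAt θ (v s) s ∧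
    HasDerivAt v (-(β + 1) * u s * v s) s ∧ HasDerivAt u (fullAccel β Λ (r s) (u s) (v s)) s

def IsReducedSolution (r θ u : ℝ → ℝ) : Prop :=
  ∀ s, HasDerivAt r (r s * u s) s ∧ HasDerivAt u (reducedAccel β L Λ (r s) (u s)) s ∧
    HasDerivAt θ (L * r s ^ (-(β + 1))) s

variable {β L Λ V}

theorem reducedAccel_eq_fullAccel {ρ : ℝ} (u : ℝ) (hρ : 0 < ρ) :
    reducedAccel β L Λ ρ u = fullAccel β Λ ρ u (L * ρ ^ (-(β + 1))) := by
  have hsq : (ρ ^ (-(β + 1))) ^ 2 = ρ ^ (-2 * (β + 1)) := by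
    rw [← rpow_natCast, ← rpow_mul hρ.le]; ring_nf
  have hfour : ρ ^ (-2 * (β + 1)) * ρ ^ 4 = ρ ^ (2 - 2 * β) := by
    rw [← rpow_natCast, ← rpow_add hρ]; ring_nf
  unfold reducedAccel fullAccel
  rw [mul_pow, hsq, ← hfour]
  ring

theorem IsFullSolution.isReducedSolution {r θ u v : ℝ → ℝ} (hsol : IsFullSolution β Λ r θ u v)
    (hpos : ∀ s, 0 < r s) (hL : ∀ s, v s * r s ^ (β + 1) = L) :
    IsReducedSolution β L Λ r θ u := by
  intro s
  obtain ⟨hr, hθ, -, hu⟩ := hsol s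
  have hv : v s = L * r s ^ (-(β + 1)) := eq_mul_rpow_neg_of_mul_rpow_eq (hpos s) (hL s)
  rw [hv] at hθ hu
  rw [reducedAccel_eq_fullAccel _ (hpos s)]
  exact ⟨hr, hu, hθ⟩

theorem IsReducedSolution.isFullSolution {r θ u : ℝ → ℝ} (hsol : IsReducedSolution β L Λ r θ u)
    (hpos : ∀ s, 0 < r s) :
    IsFullSolution β Λ r θ u (fun t => L * r t ^ (-(β + 1))) := by
  intro s
  obtain ⟨hr, hu, hθ⟩ := hsol s
  rw [reducedAccel_eq_fullAccel _ (hpos s)] at hu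
  exact ⟨hr, hθ,
    ((hr.rpow_const_of_eq_mul (-(β + 1)) (hpos s)).const_mul L).congr_deriv (by ring), hu⟩

theorem hasDerivAt_reducedEnergy {r u : ℝ → ℝ} {s w dV : ℝ} (hpos : 0 < r s)
    (hr : HasDerivAt r (r s * u s) s) (hu : HasDerivAt u w s) (hV : HasDerivAt V dV (r s)) :
    HasDerivAt (fun t => reducedEnergy β L V (r t) (u t))
      (u s * (-(L ^ 2 / r s ^ 2) + (w + β * u s ^ 2) * r s ^ (2 * β) + r s * dV)) s := by
  have hkin := (hasDerivAt_const s (L ^ 2)).div ((hr.pow 2).const_mul 2)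
    (mul_pos two_pos (pow_pos hpos 2)).ne'
  have hrad := ((hu.pow 2).const_mul (1 / 2)).mul (hr.rpow_const_of_eq_mul (2 * β) hpos)
  refine ((hkin.add hrad).add (hV.comp s hr)).congr_deriv ?_
  simp only [Pi.pow_apply]
  field_simp
  ring

theorem reducedAccel_energy_balance {ρ u dV : ℝ} (hρ : 0 < ρ) (hΛ : Λ ρ = -dV / ρ) :
    -(L ^ 2 / ρ ^ 2) + (reducedAccel β L Λ ρ u + β * u ^ 2) * ρ ^ (2 * β) + ρ * dV = 0 := by
  have hpow : ρ ^ (-2 * (β + 1)) * ρ ^ (2 * β) = (ρ ^ 2)⁻¹ := by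
    rw [← rpow_add hρ, ← rpow_natCast, ← rpow_neg hρ.le]
    congr 1; push_cast; ring
  calc -(L ^ 2 / ρ ^ 2) + (reducedAccel β L Λ ρ u + β * u ^ 2) * ρ ^ (2 * β) + ρ * dV
      = -(L ^ 2 / ρ ^ 2) + ρ ^ (-2 * (β + 1)) * ρ ^ (2 * β) * (L ^ 2 + ρ ^ 4 * (-dV / ρ))
          + ρ * dV := by
        rw [reducedAccel, hΛ]; ring
    _ = 0 := by
        rw [hpow]; field_simp; ring

theorem IsReducedSolution.reducedEnergy_eq {V' : ℝ → ℝ} {r θ u : ℝ → ℝ}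
    (hsol : IsReducedSolution β L Λ r θ u) (hpos : ∀ s, 0 < r s)
    (hV : ∀ s, HasDerivAt V (V' (r s)) (r s)) (hΛ : ∀ s, Λ (r s) = -V' (r s) / r s)
    (s₁ s₂ : ℝ) :
    reducedEnergy β L V (r s₁) (u s₁) = reducedEnergy β L V (r s₂) (u s₂) := by
  have hderiv : ∀ s, HasDerivAt (fun t => reducedEnergy β L V (r t) (u t)) 0 s := by
    intro s
    obtain ⟨hr, hu, -⟩ := hsol s
    refine (hasDerivAt_reducedEnergy (hpos s) hr hu (hV s)).congr_deriv ?_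
    rw [reducedAccel_energy_balance (hpos s) (hΛ s), mul_zero]
  exact is_const_of_deriv_eq_zero (fun t => (hderiv t).differentiableAt)
    (fun t => (hderiv t).deriv) s₁ s₂

end McGehee

end

open McGehee in
theorem mcgehee_reduced_system_general
    (a b β L : ℝ) (ha : 0 < a)
    (V V' Λ : ℝ → ℝ)
    (hV : ∀ ρ ∈ Set.Ioo a b, HasDerivAt V (V' ρ) ρ)
    (hΛ : ∀ ρ, Λ ρ = -(V' ρ) / ρ) :
    -- full solutions with angular momentum L project to reduced solutions
    (∀ r θ u v : ℝ → ℝ, (∀ s, r s ∈ Set.Ioo a b) →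
      (∀ s, HasDerivAt r (r s * u s) s ∧ HasDerivAt θ (v s) s ∧
        HasDerivAt v (-(β + 1) * u s * v s) s ∧
        HasDerivAt u (r s ^ (2 - 2 * β) * Λ (r s) - β * (u s) ^ 2 + (v s) ^ 2) s) →
      (∀ s, v s * r s ^ (β + 1) = L) →
      ∀ s, HasDerivAt r (r s * u s) s ∧
        HasDerivAt u (r s ^ (-2 * (β + 1)) * (L ^ 2 + (r s) ^ 4 * Λ (r s)) - β * (u s) ^ 2) s ∧
        HasDerivAt θ (L * r s ^ (-(β + 1))) s) ∧
    -- reduced solutions lift to full solutions with v = L r^{−(β+1)}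
    (∀ r θ u : ℝ → ℝ, (∀ s, r s ∈ Set.Ioo a b) →
      (∀ s, HasDerivAt r (r s * u s) s ∧
        HasDerivAt u (r s ^ (-2 * (β + 1)) * (L ^ 2 + (r s) ^ 4 * Λ (r s)) - β * (u s) ^ 2) s ∧
        HasDerivAt θ (L * r s ^ (-(β + 1))) s) →
      ∀ s, HasDerivAt r (r s * u s) s ∧
        HasDerivAt θ (L * r s ^ (-(β + 1))) s ∧
        HasDerivAt (fun t => L * r t ^ (-(β + 1)))
          (-(β + 1) * u s * (L * r s ^ (-(β + 1)))) s ∧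
        HasDerivAt u (r s ^ (2 - 2 * β) * Λ (r s) - β * (u s) ^ 2
          + (L * r s ^ (-(β + 1))) ^ 2) s) ∧
    -- first integral of the reduced system
    (∀ r θ u : ℝ → ℝ, (∀ s, r s ∈ Set.Ioo a b) →
      (∀ s, HasDerivAt r (r s * u s) s ∧
        HasDerivAt u (r s ^ (-2 * (β + 1)) * (L ^ 2 + (r s) ^ 4 * Λ (r s)) - β * (u s) ^ 2) s ∧
        HasDerivAt θ (L * r s ^ (-(β + 1))) s) →
      ∀ s₁ s₂ : ℝ,
        L ^ 2 / (2 * (r s₁) ^ 2) + (1 / 2) * (u s₁) ^ 2 * r s₁ ^ (2 * β) + V (r s₁)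
          = L ^ 2 / (2 * (r s₂) ^ 2) + (1 / 2) * (u s₂) ^ 2 * r s₂ ^ (2 * β) + V (r s₂)) := by
  have pos {r : ℝ → ℝ} (hr : ∀ s, r s ∈ Set.Ioo a b) (s : ℝ) : 0 < r s := ha.trans (hr s).1
  refine ⟨fun r θ u v hr hsol hL => ?_, fun r θ u hr hsol => ?_, fun r θ u hr hsol => ?_⟩
  · exact IsFullSolution.isReducedSolution hsol (pos hr) hL
  · exact IsReducedSolution.isFullSolution hsol (pos hr)
  · exact IsReducedSolution.reducedEnergy_eq hsol (pos hr) (fun s => hV _ (hr s))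
      (fun s => hΛ _)

/-- Substituting the first integral `v = L r^{−(β+1)}` into the McGehee system yields the
reduced system `r' = ru, u' = r^{−2(β+1)}(L² + r⁴Λ(r)) − βu², θ' = L r^{−(β+1)}`, which
admits the first integral `ε = L²/(2r²) + (1/2)u²r^{2β} + V(r)`; solutions of the full
system with angular momentum `L` project to solutions of the reduced system and
conversely. -/
theorem mcgehee_reduced_system
    (a b β L : ℝ) (ha : 0 < a) (hab : a < b)
    (V V' Λ : ℝ → ℝ)
    (hV : ∀ ρ ∈ Set.Ioo a b, HasDerivAt V (V' ρ) ρ)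
    (hΛ : ∀ ρ, Λ ρ = -(V' ρ) / ρ) :
    -- full solutions with angular momentum L project to reduced solutions
    (∀ r θ u v : ℝ → ℝ, (∀ s, r s ∈ Set.Ioo a b) →
      (∀ s, HasDerivAt r (r s * u s) s ∧ HasDerivAt θ (v s) s ∧
        HasDerivAt v (-(β + 1) * u s * v s) s ∧
        HasDerivAt u (r s ^ (2 - 2 * β) * Λ (r s) - β * (u s) ^ 2 + (v s) ^ 2) s) →
      (∀ s, v s * r s ^ (β + 1) = L) →
      ∀ s, HasDerivAt r (r s * u s) s ∧
        HasDerivAt u (r s ^ (-2 * (β + 1)) * (L ^ 2 + (r s) ^ 4 * Λ (r s)) - β * (u s) ^ 2) s ∧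
        HasDerivAt θ (L * r s ^ (-(β + 1))) s) ∧
    -- reduced solutions lift to full solutions with v = L r^{−(β+1)}
    (∀ r θ u : ℝ → ℝ, (∀ s, r s ∈ Set.Ioo a b) →
      (∀ s, HasDerivAt r (r s * u s) s ∧
        HasDerivAt u (r s ^ (-2 * (β + 1)) * (L ^ 2 + (r s) ^ 4 * Λ (r s)) - β * (u s) ^ 2) s ∧
        HasDerivAt θ (L * r s ^ (-(β + 1))) s) →
      ∀ s, HasDerivAt r (r s * u s) s ∧
        HasDerivAt θ (L * r s ^ (-(β + 1))) s ∧
        HasDerivAt (fun t => L * r t ^ (-(β + 1)))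
          (-(β + 1) * u s * (L * r s ^ (-(β + 1)))) s ∧
        HasDerivAt u (r s ^ (2 - 2 * β) * Λ (r s) - β * (u s) ^ 2
          + (L * r s ^ (-(β + 1))) ^ 2) s) ∧
    -- first integral of the reduced system
    (∀ r θ u : ℝ → ℝ, (∀ s, r s ∈ Set.Ioo a b) →
      (∀ s, HasDerivAt r (r s * u s) s ∧
        HasDerivAt u (r s ^ (-2 * (β + 1)) * (L ^ 2 + (r s) ^ 4 * Λ (r s)) - β * (u s) ^ 2) s ∧
        HasDerivAt θ (L * r s ^ (-(β + 1))) s) →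
      ∀ s₁ s₂ : ℝ,
        L ^ 2 / (2 * (r s₁) ^ 2) + (1 / 2) * (u s₁) ^ 2 * r s₁ ^ (2 * β) + V (r s₁)
          = L ^ 2 / (2 * (r s₂) ^ 2) + (1 / 2) * (u s₂) ^ 2 * r s₂ ^ (2 * β) + V (r s₂)) :=
  mcgehee_reduced_system_general a b β L ha V V' Λ hV hΛ
end

section
/- If L ≠ 0 and there is γ > 0 such that r^γ V(r) extends C¹ to r = 0, then for β ≤ min{−1, −γ/2} the reduced system r' = ru, u' = r^{−2(β+1)}(L² + r⁴Λ(r)) − βu², θ' = L r^{−(β+1)} extends continuously to [0,b) × S¹ × ℝ. -/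
/-!
On `r > 0` the factor `r^{-2(β+1)} r⁴` absorbs the singular powers `r^{-2-γ}` and `r^{-1-γ}`
in `Λ = γ f r^{-2-γ} - f' r^{-1-γ}` (with `f = r^γ V`), turning the `u'`-component into
`L² r^{-2(β+1)} + γ f r^{-2β-γ} - f' r^{1-2β-γ} - β u²`. The hypothesis `β ≤ min{-1, -γ/2}`
makes every exponent nonnegative, so each term is continuous up to `r = 0`, where `f` and `f'`
are continuous.
-/

open Set

noncomputable def regularizedMcGeheeField (β γ L : ℝ) (f f' : ℝ → ℝ) (p : ℝ × ℝ × ℝ) :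
    ℝ × ℝ × ℝ :=
  (p.1 * p.2.1,
    L ^ 2 * p.1 ^ (-2 * (β + 1)) + γ * f p.1 * p.1 ^ (-2 * β - γ)
      - f' p.1 * p.1 ^ (1 - 2 * β - γ) - β * p.2.1 ^ 2,
    L * p.1 ^ (-(β + 1)))

theorem continuousOn_regularizedMcGeheeField {β γ L : ℝ} {f f' : ℝ → ℝ} {s : Set ℝ}
    (hβ₁ : β ≤ -1) (hβγ : β ≤ -γ / 2) (hf : ContinuousOn f s) (hf' : ContinuousOn f' s) :
    ContinuousOn (regularizedMcGeheeField β γ L f f') {p | p.1 ∈ s} := by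
  have hfst : MapsTo (Prod.fst : ℝ × ℝ × ℝ → ℝ) {p | p.1 ∈ s} s := fun _ hp => hp
  have hrpow : ∀ e : ℝ, 0 ≤ e → Continuous fun p : ℝ × ℝ × ℝ => p.1 ^ e :=
    fun e he => (Real.continuous_rpow_const he).comp continuous_fst
  have hf₁ := hf.comp continuous_fst.continuousOn hfst
  have hf'₁ := hf'.comp continuous_fst.continuousOn hfst
  refine .prodMk (by fun_prop)
    (.prodMk ?_ (continuous_const.mul (hrpow _ (by linarith))).continuousOn)
  refine .sub (.sub (.add ?_ ?_) ?_) (by fun_prop)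
  · exact (continuous_const.mul (hrpow _ (by linarith))).continuousOn
  · exact (continuous_const.continuousOn.mul hf₁).mul (hrpow _ (by linarith)).continuousOn
  · exact hf'₁.mul (hrpow _ (by linarith)).continuousOn

theorem regularizedMcGeheeField_eq {β γ L : ℝ} {f f' Λ : ℝ → ℝ} {p : ℝ × ℝ × ℝ} (hp : 0 < p.1)
    (hΛ : Λ p.1 = γ * f p.1 * p.1 ^ (-2 - γ) - f' p.1 * p.1 ^ (-1 - γ)) :
    regularizedMcGeheeField β γ L f f' p =
      (p.1 * p.2.1, p.1 ^ (-2 * (β + 1)) * (L ^ 2 + p.1 ^ 4 * Λ p.1) - β * p.2.1 ^ 2,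
        L * p.1 ^ (-(β + 1))) := by
  obtain ⟨r, u, θ⟩ := p
  simp only at hp hΛ ⊢
  have hpow : ∀ e e' : ℝ, -2 * (β + 1) + 4 + e = e' →
      r ^ (-2 * (β + 1)) * r ^ 4 * r ^ e = r ^ e' := by
    rintro e _ rfl
    rw [← Real.rpow_natCast, ← Real.rpow_add hp, ← Real.rpow_add hp, Nat.cast_ofNat]
  have h₁ := hpow (-2 - γ) (-2 * β - γ) (by ring)
  have h₂ := hpow (-1 - γ) (1 - 2 * β - γ) (by ring)
  rw [regularizedMcGeheeField, hΛ, Prod.mk.injEq, Prod.mk.injEq]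
  refine ⟨rfl, ?_, rfl⟩
  linear_combination (-γ * f r) * h₁ + f' r * h₂

theorem mcgehee_reduced_continuous_extension_general
    (b γ β L : ℝ)
    (hβ : β ≤ min (-1) (-γ / 2))
    (f f' Λ : ℝ → ℝ)
    (hf : ∀ ρ ∈ Set.Ico 0 b, HasDerivWithinAt f (f' ρ) (Set.Ico 0 b) ρ)
    (hf' : ContinuousOn f' (Set.Ico 0 b))
    (hΛ : ∀ ρ ∈ Set.Ioo 0 b, Λ ρ = γ * f ρ * ρ ^ (-2 - γ) - f' ρ * ρ ^ (-1 - γ)) :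
    ∃ G : ℝ × ℝ × ℝ → ℝ × ℝ × ℝ,
      ContinuousOn G {p : ℝ × ℝ × ℝ | p.1 ∈ Set.Ico 0 b} ∧
      ∀ p : ℝ × ℝ × ℝ, p.1 ∈ Set.Ioo 0 b →
        G p = (p.1 * p.2.1,
          p.1 ^ (-2 * (β + 1)) * (L ^ 2 + p.1 ^ 4 * Λ p.1) - β * p.2.1 ^ 2,
          L * p.1 ^ (-(β + 1))) := by
  have hfc : ContinuousOn f (Ico 0 b) := fun ρ hρ => (hf ρ hρ).continuousWithinAt
  refine ⟨regularizedMcGeheeField β γ L f f', ?_, fun p hp => ?_⟩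
  · exact continuousOn_regularizedMcGeheeField (le_min_iff.1 hβ).1 (le_min_iff.1 hβ).2 hfc hf'
  · exact regularizedMcGeheeField_eq hp.1 (hΛ p.1 hp)

/-- If `L ≠ 0` and `r^γ V(r)` extends C¹ to `r = 0` (γ > 0), then for
`β ≤ min{−1, −γ/2}` the reduced McGehee system
`r' = ru, u' = r^{−2(β+1)}(L² + r⁴Λ(r)) − βu², θ' = L r^{−(β+1)}`
extends continuously to `r = 0`. -/
theorem mcgehee_reduced_continuous_extension
    (b γ β L : ℝ) (hb : 0 < b) (hγ : 0 < γ) (hL : L ≠ 0)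
    (hβ : β ≤ min (-1) (-γ / 2))
    (V f f' Λ : ℝ → ℝ)
    (hf : ∀ ρ ∈ Set.Ico 0 b, HasDerivWithinAt f (f' ρ) (Set.Ico 0 b) ρ)
    (hf' : ContinuousOn f' (Set.Ico 0 b))
    (hfV : ∀ ρ ∈ Set.Ioo 0 b, f ρ = ρ ^ γ * V ρ)
    (hΛ : ∀ ρ ∈ Set.Ioo 0 b, Λ ρ = γ * f ρ * ρ ^ (-2 - γ) - f' ρ * ρ ^ (-1 - γ)) :
    ∃ G : ℝ × ℝ × ℝ → ℝ × ℝ × ℝ,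
      ContinuousOn G {p : ℝ × ℝ × ℝ | p.1 ∈ Set.Ico 0 b} ∧
      ∀ p : ℝ × ℝ × ℝ, p.1 ∈ Set.Ioo 0 b →
        G p = (p.1 * p.2.1,
          p.1 ^ (-2 * (β + 1)) * (L ^ 2 + p.1 ^ 4 * Λ p.1) - β * p.2.1 ^ 2,
          L * p.1 ^ (-(β + 1))) :=
  mcgehee_reduced_continuous_extension_general b γ β L hβ f f' Λ hf hf' hΛ
end

section
/- For the Schwarzschild potential V(r) = −M L²/r³ − μM/r with β = −3/2, the reduced McGehee system takes the form r' = ru, u' = r(L² − μMr) − 3L²M + (3/2)u², θ' = L√r, and the quantity ε = u²/(2r³) + L²/(2r²) − M(L²/r³ + μ/r) is constant along its solutions (for r > 0). -/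
/-!
In McGehee variables `u = r^(-β) ṙ` (with time rescaled so that `r' = r u`), the energy
`½ (ṙ² + L²/r²) + V(r)` becomes `r^(2β) u²/2 + L²/(2r²) + V(r)`, and along any solution of
`r' = r u, u' = r^(-2(β+1)) (L² + r⁴ Λ(r)) - β u²` with `Λ = -V'/r` its derivative cancels
identically. For the Schwarzschild potential and `β = -3/2` the exponent `-2(β+1)` is `1`,
which gives the polynomial vector field, and `r^(2β) = r⁻³` gives `ε`.
-/

open Real

noncomputable def mcgeheeVectorFieldU (β L : ℝ) (Λ : ℝ → ℝ) (r u : ℝ) : ℝ :=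
  r ^ (-2 * (β + 1)) * (L ^ 2 + r ^ 4 * Λ r) - β * u ^ 2

noncomputable def mcgeheeEnergy (β L : ℝ) (V : ℝ → ℝ) (r u : ℝ) : ℝ :=
  r ^ (2 * β) * u ^ 2 / 2 + L ^ 2 / (2 * r ^ 2) + V r

lemma rpow_neg_two_mul_add_one {r : ℝ} (hr : 0 < r) (β : ℝ) :
    r ^ (-2 * (β + 1)) = (r ^ (2 * β) * r ^ 2)⁻¹ := by
  rw [show -2 * (β + 1) = -(2 * β + 2) by ring, rpow_neg hr.le, rpow_add hr, rpow_two]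

theorem hasDerivAt_mcgeheeEnergy {β L : ℝ} {V Λ r u : ℝ → ℝ} {s : ℝ} (hrs : 0 < r s)
    (hV : HasDerivAt V (-r s * Λ (r s)) (r s)) (hr : HasDerivAt r (r s * u s) s)
    (hu : HasDerivAt u (mcgeheeVectorFieldU β L Λ (r s) (u s)) s) :
    HasDerivAt (fun t => mcgeheeEnergy β L V (r t) (u t)) 0 s := by
  have hkin := ((hr.rpow_const (p := 2 * β) (.inl hrs.ne')).mul (hu.fun_pow 2)).div_const 2
  have hcen := (hasDerivAt_const s (L ^ 2)).fun_div ((hr.fun_pow 2).const_mul 2)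
    (mul_ne_zero two_ne_zero (pow_ne_zero 2 hrs.ne'))
  refine ((hkin.add hcen).add (hV.comp s hr)).congr_deriv ?_
  rw [mcgeheeVectorFieldU, rpow_neg_two_mul_add_one hrs, rpow_sub_one hrs.ne']
  have : 0 < r s ^ (2 * β) := rpow_pos_of_pos hrs _
  field_simp
  ring

theorem mcgeheeEnergy_eq_of_hasDerivAt {β L : ℝ} {V Λ r u : ℝ → ℝ} (hr0 : ∀ s, 0 < r s)
    (hV : ∀ ρ, 0 < ρ → HasDerivAt V (-ρ * Λ ρ) ρ) (hr : ∀ s, HasDerivAt r (r s * u s) s)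
    (hu : ∀ s, HasDerivAt u (mcgeheeVectorFieldU β L Λ (r s) (u s)) s) (s₁ s₂ : ℝ) :
    mcgeheeEnergy β L V (r s₁) (u s₁) = mcgeheeEnergy β L V (r s₂) (u s₂) :=
  is_const_of_deriv_eq_zero
    (fun s => (hasDerivAt_mcgeheeEnergy (hr0 s) (hV _ (hr0 s)) (hr s) (hu s)).differentiableAt)
    (fun s => (hasDerivAt_mcgeheeEnergy (hr0 s) (hV _ (hr0 s)) (hr s) (hu s)).deriv) s₁ s₂

noncomputable def schwarzschildPotential (M L μ : ℝ) (ρ : ℝ) : ℝ :=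
  -M * (L ^ 2 / ρ ^ 3 + μ / ρ)

lemma hasDerivAt_schwarzschildPotential (M L μ : ℝ) {ρ : ℝ} (hρ : 0 < ρ) :
    HasDerivAt (schwarzschildPotential M L μ)
      (-ρ * (-3 * M * L ^ 2 / ρ ^ 5 - μ * M / ρ ^ 3)) ρ := by
  have hρ' := hρ.ne'
  refine ((((hasDerivAt_const ρ (L ^ 2)).fun_div (hasDerivAt_pow 3 ρ) (pow_ne_zero 3 hρ')).fun_add
    ((hasDerivAt_const ρ μ).fun_div (hasDerivAt_id' ρ) hρ')).const_mul (-M)).congr_deriv ?_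
  field_simp
  ring

lemma mcgeheeVectorFieldU_schwarzschild {M L μ r u : ℝ} {Λ : ℝ → ℝ} (hr : 0 < r)
    (hΛ : Λ r = -3 * M * L ^ 2 / r ^ 5 - μ * M / r ^ 3) :
    mcgeheeVectorFieldU (-3 / 2) L Λ r u
      = r * (L ^ 2 - μ * M * r) - 3 * L ^ 2 * M + 3 / 2 * u ^ 2 := by
  rw [mcgeheeVectorFieldU, hΛ, show -2 * ((-3 / 2 : ℝ) + 1) = 1 by norm_num, rpow_one]
  field_simp
  ring

lemma mcgeheeEnergy_schwarzschild (M L μ r u : ℝ) :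
    mcgeheeEnergy (-3 / 2) L (schwarzschildPotential M L μ) r u
      = u ^ 2 / (2 * r ^ 3) + L ^ 2 / (2 * r ^ 2) - M * (L ^ 2 / r ^ 3 + μ / r) := by
  rw [mcgeheeEnergy, schwarzschildPotential, show 2 * (-3 / 2 : ℝ) = ((-3 : ℤ) : ℝ) by norm_num,
    rpow_intCast, zpow_neg, zpow_ofNat]
  ring

theorem schwarzschild_reduced_system_general
    (M L μ : ℝ)
    (Λ : ℝ → ℝ)
    (hΛ : ∀ ρ : ℝ, 0 < ρ → Λ ρ = -3 * M * L ^ 2 / ρ ^ 5 - μ * M / ρ ^ 3) :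
    -- the reduced McGehee right-hand side with β = −3/2 takes the stated form
    (∀ r u : ℝ, 0 < r →
      r ^ (-2 * ((-3 / 2 : ℝ) + 1)) * (L ^ 2 + r ^ 4 * Λ r) - (-3 / 2 : ℝ) * u ^ 2
        = r * (L ^ 2 - μ * M * r) - 3 * L ^ 2 * M + (3 / 2) * u ^ 2 ∧
      L * r ^ (-((-3 / 2 : ℝ) + 1)) = L * Real.sqrt r) ∧
    -- ε is a first integral
    (∀ r u θ : ℝ → ℝ, (∀ s, 0 < r s) →
      (∀ s, HasDerivAt r (r s * u s) s ∧
        HasDerivAt u (r s * (L ^ 2 - μ * M * r s) - 3 * L ^ 2 * M + (3 / 2) * (u s) ^ 2) s ∧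
        HasDerivAt θ (L * Real.sqrt (r s)) s) →
      ∀ s₁ s₂ : ℝ,
        (u s₁) ^ 2 / (2 * (r s₁) ^ 3) + L ^ 2 / (2 * (r s₁) ^ 2)
            - M * (L ^ 2 / (r s₁) ^ 3 + μ / (r s₁))
          = (u s₂) ^ 2 / (2 * (r s₂) ^ 3) + L ^ 2 / (2 * (r s₂) ^ 2)
            - M * (L ^ 2 / (r s₂) ^ 3 + μ / (r s₂))) := by
  have hU (r u : ℝ) (hr : 0 < r) := mcgeheeVectorFieldU_schwarzschild (u := u) hr (hΛ r hr)
  refine ⟨fun r u hr => ⟨hU r u hr, by rw [sqrt_eq_rpow]; norm_num⟩, ?_⟩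
  intro r u θ hr hsys s₁ s₂
  have hV (ρ : ℝ) (hρ : 0 < ρ) : HasDerivAt (schwarzschildPotential M L μ) (-ρ * Λ ρ) ρ :=
    hΛ ρ hρ ▸ hasDerivAt_schwarzschildPotential M L μ hρ
  have hε := mcgeheeEnergy_eq_of_hasDerivAt hr hV (fun s => (hsys s).1)
    (fun s => (hU _ _ (hr s)).symm ▸ (hsys s).2.1) s₁ s₂
  simpa only [mcgeheeEnergy_schwarzschild] using hε

/-- For the Schwarzschild potential `V(r) = −ML²/r³ − μM/r` with `β = −3/2`, the reduced
McGehee system takes the form `r' = ru, u' = r(L² − μMr) − 3L²M + (3/2)u², θ' = L√r`,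
and `ε = u²/(2r³) + L²/(2r²) − M(L²/r³ + μ/r)` is constant along its solutions. -/
theorem schwarzschild_reduced_system
    (M L μ : ℝ) (hM : 0 < M) (hμ : μ = -1 ∨ μ = 0 ∨ μ = 1)
    (Λ : ℝ → ℝ)
    (hΛ : ∀ ρ : ℝ, 0 < ρ → Λ ρ = -3 * M * L ^ 2 / ρ ^ 5 - μ * M / ρ ^ 3) :
    -- the reduced McGehee right-hand side with β = −3/2 takes the stated form
    (∀ r u : ℝ, 0 < r →
      r ^ (-2 * ((-3 / 2 : ℝ) + 1)) * (L ^ 2 + r ^ 4 * Λ r) - (-3 / 2 : ℝ) * u ^ 2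
        = r * (L ^ 2 - μ * M * r) - 3 * L ^ 2 * M + (3 / 2) * u ^ 2 ∧
      L * r ^ (-((-3 / 2 : ℝ) + 1)) = L * Real.sqrt r) ∧
    -- ε is a first integral
    (∀ r u θ : ℝ → ℝ, (∀ s, 0 < r s) →
      (∀ s, HasDerivAt r (r s * u s) s ∧
        HasDerivAt u (r s * (L ^ 2 - μ * M * r s) - 3 * L ^ 2 * M + (3 / 2) * (u s) ^ 2) s ∧
        HasDerivAt θ (L * Real.sqrt (r s)) s) →
      ∀ s₁ s₂ : ℝ,
        (u s₁) ^ 2 / (2 * (r s₁) ^ 3) + L ^ 2 / (2 * (r s₁) ^ 2)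
            - M * (L ^ 2 / (r s₁) ^ 3 + μ / (r s₁))
          = (u s₂) ^ 2 / (2 * (r s₂) ^ 3) + L ^ 2 / (2 * (r s₂) ^ 2)
            - M * (L ^ 2 / (r s₂) ^ 3 + μ / (r s₂))) :=
  schwarzschild_reduced_system_general M L μ Λ hΛ
end

section
/- For the Schwarzschild null system (μ = 0) r' = ru, u' = rL² − 3L²M + (3/2)u² with L ≠ 0, the fixed points are (r,u) = (0, ±√(2M)L) and (r,u) = (3M, 0). The linearization at (3M,0) has eigenvalues ±√(3ML²), and at (0, ±√(2M)L) has eigenvalues ±3√(2ML²) and ±√(2ML²); in particular all fixed points are hyperbolic, (3M,0) is a saddle, (0, √(2ML²)) is an unstable node and (0, −√(2ML²)) is a stable node. -/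
/-! The equation `r u = 0` splits the fixed points into `u = 0`, which forces `r = 3M`, and
`r = 0`, which forces `u² = 2ML²`. The Jacobian `!![u, r; L², 3u]` is antidiagonal at `(3M, 0)`,
with characteristic polynomial `λ² − 3ML²`, and lower triangular at `(0, u)`, so there its
eigenvalues are the diagonal entries `u` and `3u`. -/

namespace SchwarzschildNull

lemma sq_eq_iff_eq_sqrt_or_eq_neg_sqrt {c x : ℝ} (hc : 0 ≤ c) :
    x ^ 2 = c ↔ x = √c ∨ x = -√c := by
  rw [← sq_eq_sq_iff_eq_or_eq_neg, Real.sq_sqrt hc]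

lemma det_fin_two_sub_smul_one {R : Type*} [CommRing R] (a b c d lam : R) :
    (!![a, b; c, d] - lam • (1 : Matrix (Fin 2) (Fin 2) R)).det =
      (a - lam) * (d - lam) - b * c := by
  simp [Matrix.det_fin_two]

lemma det_antidiagonal_sub_smul_one_eq_zero_iff {b c lam : ℝ} (hbc : 0 ≤ b * c) :
    (!![0, b; c, 0] - lam • (1 : Matrix (Fin 2) (Fin 2) ℝ)).det = 0 ↔
      lam = √(b * c) ∨ lam = -√(b * c) := by
  rw [det_fin_two_sub_smul_one, ← sq_eq_iff_eq_sqrt_or_eq_neg_sqrt hbc,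
    ← sub_eq_zero (a := lam ^ 2)]
  ring_nf

lemma det_lowerTriangular_sub_smul_one_eq_zero_iff {R : Type*} [CommRing R] [IsDomain R]
    (a c d lam : R) :
    (!![a, 0; c, d] - lam • (1 : Matrix (Fin 2) (Fin 2) R)).det = 0 ↔ lam = a ∨ lam = d := by
  rw [det_fin_two_sub_smul_one, zero_mul, sub_zero, mul_eq_zero, sub_eq_zero, sub_eq_zero,
    eq_comm, @eq_comm _ d]

lemma fixedPoint_iff {K M r u : ℝ} (hK : K ≠ 0) (hMK : 0 ≤ M * K) :
    (r * u = 0 ∧ r * K - 3 * K * M + (3 / 2) * u ^ 2 = 0) ↔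
      ((r, u) = (3 * M, 0) ∨ (r, u) = (0, √(2 * M * K)) ∨ (r, u) = (0, -√(2 * M * K))) := by
  have h2MK : 0 ≤ 2 * M * K := by linarith
  simp only [Prod.mk.injEq]
  constructor
  · rintro ⟨hru, hsecond⟩
    rcases mul_eq_zero.1 hru with rfl | rfl
    · have hu : u ^ 2 = 2 * M * K := by linarith
      rw [sq_eq_iff_eq_sqrt_or_eq_neg_sqrt h2MK] at hu
      tauto
    · have hr : (r - 3 * M) * K = 0 := by linarith
      exact .inl ⟨by linarith [(mul_eq_zero.1 hr).resolve_right hK], rfl⟩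
  · rintro (⟨rfl, rfl⟩ | ⟨rfl, rfl⟩ | ⟨rfl, rfl⟩) <;> refine ⟨by ring, ?_⟩
    · ring
    all_goals nlinarith [Real.sq_sqrt h2MK]

end SchwarzschildNull

open SchwarzschildNull in
/-- For the Schwarzschild null system `r' = ru, u' = rL² − 3L²M + (3/2)u²` with `L ≠ 0`:
the fixed points are `(3M, 0)` and `(0, ±√(2M)L)`; the Jacobian at `(3M,0)` has
eigenvalues `±√(3ML²)`, and at `(0, ±√(2ML²))` has eigenvalues `±√(2ML²)`, `±3√(2ML²)`;
all fixed points are hyperbolic, `(3M,0)` is a saddle, `(0, √(2ML²))` an unstable node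
and `(0, −√(2ML²))` a stable node. -/
theorem schwarzschild_null_fixed_points
    (M L : ℝ) (hM : 0 < M) (hL : L ≠ 0) :
    -- fixed points
    (∀ r u : ℝ, (r * u = 0 ∧ r * L ^ 2 - 3 * L ^ 2 * M + (3 / 2) * u ^ 2 = 0) ↔
      ((r, u) = (3 * M, 0) ∨ (r, u) = (0, Real.sqrt (2 * M) * |L|) ∨
        (r, u) = (0, -(Real.sqrt (2 * M) * |L|)))) ∧
    -- eigenvalues of the Jacobian !![u, r; L², 3u] at (3M, 0): saddle
    (∀ lam : ℝ,
      Matrix.det (!![(0 : ℝ), 3 * M; L ^ 2, 0] - lam • (1 : Matrix (Fin 2) (Fin 2) ℝ)) = 0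
        ↔ lam = Real.sqrt (3 * M * L ^ 2) ∨ lam = -Real.sqrt (3 * M * L ^ 2)) ∧
    -- eigenvalues at (0, ±√(2ML²)): nodes
    (∀ ε : ℝ, ε = 1 ∨ ε = -1 →
      ∀ lam : ℝ,
        (Matrix.det (!![ε * Real.sqrt (2 * M * L ^ 2), (0 : ℝ);
            L ^ 2, 3 * (ε * Real.sqrt (2 * M * L ^ 2))]
            - lam • (1 : Matrix (Fin 2) (Fin 2) ℝ)) = 0
          ↔ lam = ε * Real.sqrt (2 * M * L ^ 2) ∨ lam = 3 * (ε * Real.sqrt (2 * M * L ^ 2)))) ∧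
    -- hyperbolicity and node character: the eigenvalues are nonzero with the stated signs
    0 < Real.sqrt (3 * M * L ^ 2) ∧ 0 < Real.sqrt (2 * M * L ^ 2) := by
  have hL2 : 0 < L ^ 2 := by positivity
  have hsqrt : √(2 * M) * |L| = √(2 * M * L ^ 2) := by
    rw [← Real.sqrt_sq_eq_abs, ← Real.sqrt_mul (by positivity)]
  refine ⟨fun r u => ?_, fun lam => ?_, fun ε _ lam => ?_, by positivity, by positivity⟩
  · rw [hsqrt]
    exact fixedPoint_iff hL2.ne' (by positivity)
  · exact det_antidiagonal_sub_smul_one_eq_zero_iff (by positivity)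
  · exact det_lowerTriangular_sub_smul_one_eq_zero_iff _ _ _ lam
end

section
/- For the Schwarzschild timelike system (μ = 1) r' = ru, u' = r(L² − Mr) − 3L²M + (3/2)u², fixed points with r > 0 exist if and only if L² ≥ 12M², in which case they are (r, u) = ((L² ± |L|√(L² − 12M²))/(2M), 0). For L² > 12M², the fixed point with r = r₊ is a center (the Jacobian there has purely imaginary nonzero eigenvalues) and the one with r = r₋ is a saddle (real eigenvalues of opposite sign). -/
/-!
Since `r > 0`, a fixed point has `u = 0`, and then `r` is a root of the quadratic
`M r² - L² r + 3 L² M`, whose discriminant is `L² (L² - 12 M²)`; its roots are `r₊` and `r₋`.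
At `(r, 0)` the Jacobian is `!![0, r; L² - 2 M r, 0]`, with characteristic polynomial
`λ² - r (L² - 2 M r)`. Since `2 M r± - L² = ± |L| √(L² - 12 M²)`, the product `r (L² - 2 M r)` is
negative at `r₊` (a pair `± i ω`) and positive at `r₋` (a pair `± c`).
-/

open Real

theorem Matrix.det_antidiag_sub_smul_one_eq_zero_iff {R : Type*} [CommRing R] [NoZeroDivisors R]
    {a b c : R} (h : a * b = c ^ 2) (lam : R) :
    (!![0, a; b, 0] - lam • (1 : Matrix (Fin 2) (Fin 2) R)).det = 0 ↔ lam = c ∨ lam = -c := by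
  have hdet : (!![0, a; b, 0] - lam • (1 : Matrix (Fin 2) (Fin 2) R)).det = lam ^ 2 - c ^ 2 := by
    simp only [det_fin_two, Fin.isValue, sub_apply, of_apply, cons_val', cons_val_zero,
      cons_val_fin_one, smul_apply, one_apply_eq, smul_eq_mul, mul_one, zero_sub, cons_val_one,
      mul_neg, neg_mul, neg_neg, one_apply_ne, zero_ne_one, one_ne_zero, ne_eq, not_false_eq_true,
      mul_zero, sub_zero, ← h]
    ring
  rw [hdet, sub_eq_zero, sq_eq_sq_iff_eq_or_eq_neg]

namespace Schwarzschild

variable {M L r u : ℝ}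

def IsFixedPoint (M L r u : ℝ) : Prop :=
  r * u = 0 ∧ r * (L ^ 2 - M * r) - 3 * L ^ 2 * M + (3 / 2) * u ^ 2 = 0

noncomputable def rPlus (M L : ℝ) : ℝ := (L ^ 2 + |L| * √(L ^ 2 - 12 * M ^ 2)) / (2 * M)

noncomputable def rMinus (M L : ℝ) : ℝ := (L ^ 2 - |L| * √(L ^ 2 - 12 * M ^ 2)) / (2 * M)

theorem isFixedPoint_iff_quadratic (hr : 0 < r) :
    IsFixedPoint M L r u ↔ u = 0 ∧ M * (r * r) + -L ^ 2 * r + 3 * L ^ 2 * M = 0 := by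
  rw [IsFixedPoint, mul_eq_zero, or_iff_right hr.ne']
  refine and_congr_right fun hu => ?_
  subst hu
  constructor <;> intro h <;> linear_combination -h

theorem discrim_eq : discrim M (-L ^ 2) (3 * L ^ 2 * M) = L ^ 2 * (L ^ 2 - 12 * M ^ 2) := by
  rw [discrim]
  ring

theorem discrim_eq_mul_self (h : 12 * M ^ 2 ≤ L ^ 2) :
    discrim M (-L ^ 2) (3 * L ^ 2 * M) =
      (|L| * √(L ^ 2 - 12 * M ^ 2)) * (|L| * √(L ^ 2 - 12 * M ^ 2)) := by
  rw [discrim_eq, mul_mul_mul_comm, abs_mul_abs_self, mul_self_sqrt (by linarith), sq]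

theorem quadratic_eq_zero_iff_eq_rPlus_or_eq_rMinus (hM : 0 < M) (h : 12 * M ^ 2 ≤ L ^ 2) :
    M * (r * r) + -L ^ 2 * r + 3 * L ^ 2 * M = 0 ↔ r = rPlus M L ∨ r = rMinus M L := by
  rw [quadratic_eq_zero_iff hM.ne' (discrim_eq_mul_self h), neg_neg]
  rfl

theorem twelve_mul_sq_le_sq_of_quadratic_eq_zero (hM : 0 < M) (hr : 0 < r)
    (h : M * (r * r) + -L ^ 2 * r + 3 * L ^ 2 * M = 0) : 12 * M ^ 2 ≤ L ^ 2 := by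
  have hL : 0 < L ^ 2 := by
    refine (sq_nonneg L).lt_of_ne' fun hL => ?_
    rw [hL] at h
    exact (by positivity : 0 < M * (r * r)).ne' (by linarith)
  have hdisc : 0 ≤ L ^ 2 * (L ^ 2 - 12 * M ^ 2) := by
    rw [← discrim_eq, discrim_eq_sq_of_quadratic_eq_zero h]
    positivity
  exact sub_nonneg.mp (nonneg_of_mul_nonneg_right hdisc hL)

theorem isFixedPoint_iff (hM : 0 < M) (h : 12 * M ^ 2 ≤ L ^ 2) (hr : 0 < r) :
    IsFixedPoint M L r u ↔ u = 0 ∧ (r = rPlus M L ∨ r = rMinus M L) := by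
  rw [isFixedPoint_iff_quadratic hr, quadratic_eq_zero_iff_eq_rPlus_or_eq_rMinus hM h]

theorem abs_mul_sqrt_lt_sq (hM : 0 < M) (h : 12 * M ^ 2 ≤ L ^ 2) :
    |L| * √(L ^ 2 - 12 * M ^ 2) < L ^ 2 := by
  have hL : 0 < |L| := abs_pos.mpr fun hL => by subst hL; nlinarith
  calc |L| * √(L ^ 2 - 12 * M ^ 2) < |L| * √(L ^ 2) :=
        mul_lt_mul_of_pos_left (sqrt_lt_sqrt (by linarith) (by nlinarith)) hL
    _ = L ^ 2 := by rw [sqrt_sq_eq_abs, abs_mul_abs_self, sq]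

theorem abs_mul_sqrt_pos (h : 12 * M ^ 2 < L ^ 2) : 0 < |L| * √(L ^ 2 - 12 * M ^ 2) :=
  mul_pos (abs_pos.mpr fun hL => by subst hL; nlinarith) (sqrt_pos.mpr (by linarith))

theorem rPlus_pos (hM : 0 < M) (h : 12 * M ^ 2 ≤ L ^ 2) : 0 < rPlus M L := by
  have hL : 0 < L ^ 2 := (by positivity : 0 ≤ |L| * √(L ^ 2 - 12 * M ^ 2)).trans_lt
    (abs_mul_sqrt_lt_sq hM h)
  exact div_pos (by positivity) (by positivity)

theorem rMinus_pos (hM : 0 < M) (h : 12 * M ^ 2 ≤ L ^ 2) : 0 < rMinus M L :=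
  div_pos (sub_pos.mpr (abs_mul_sqrt_lt_sq hM h)) (by positivity)

theorem two_mul_mul_rPlus_sub_sq (hM : M ≠ 0) :
    2 * M * rPlus M L - L ^ 2 = |L| * √(L ^ 2 - 12 * M ^ 2) := by
  rw [rPlus]
  field_simp
  ring

theorem sq_sub_two_mul_mul_rMinus (hM : M ≠ 0) :
    L ^ 2 - 2 * M * rMinus M L = |L| * √(L ^ 2 - 12 * M ^ 2) := by
  rw [rMinus]
  field_simp
  ring

theorem rPlus_mul_pos (hM : 0 < M) (h : 12 * M ^ 2 < L ^ 2) :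
    0 < rPlus M L * (2 * M * rPlus M L - L ^ 2) := by
  rw [two_mul_mul_rPlus_sub_sq hM.ne']
  exact mul_pos (rPlus_pos hM h.le) (abs_mul_sqrt_pos h)

theorem rMinus_mul_pos (hM : 0 < M) (h : 12 * M ^ 2 < L ^ 2) :
    0 < rMinus M L * (L ^ 2 - 2 * M * rMinus M L) := by
  rw [sq_sub_two_mul_mul_rMinus hM.ne']
  exact mul_pos (rMinus_pos hM h.le) (abs_mul_sqrt_pos h)

theorem exists_isFixedPoint_iff (hM : 0 < M) :
    (∃ r u, 0 < r ∧ IsFixedPoint M L r u) ↔ 12 * M ^ 2 ≤ L ^ 2 := by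
  constructor
  · rintro ⟨r, u, hr, hfix⟩
    exact twelve_mul_sq_le_sq_of_quadratic_eq_zero hM hr ((isFixedPoint_iff_quadratic hr).1 hfix).2
  · intro h
    exact ⟨rPlus M L, 0, rPlus_pos hM h,
      (isFixedPoint_iff hM h (rPlus_pos hM h)).2 ⟨rfl, Or.inl rfl⟩⟩

end Schwarzschild

/-- For the Schwarzschild timelike system `r' = ru, u' = r(L² − Mr) − 3L²M + (3/2)u²`:
fixed points with `r > 0` exist iff `L² ≥ 12M²`, in which case they are
`(r, u) = ((L² ± |L|√(L² − 12M²))/(2M), 0)`. For `L² > 12M²`, the Jacobian at `r₊` has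
purely imaginary nonzero eigenvalues (center) and at `r₋` real eigenvalues of opposite
sign (saddle). -/
theorem schwarzschild_timelike_fixed_points
    (M L : ℝ) (hM : 0 < M) :
    let rp : ℝ := (L ^ 2 + |L| * Real.sqrt (L ^ 2 - 12 * M ^ 2)) / (2 * M)
    let rm : ℝ := (L ^ 2 - |L| * Real.sqrt (L ^ 2 - 12 * M ^ 2)) / (2 * M)
    -- existence of fixed points with r > 0
    ((∃ r u : ℝ, 0 < r ∧ r * u = 0 ∧
        r * (L ^ 2 - M * r) - 3 * L ^ 2 * M + (3 / 2) * u ^ 2 = 0) ↔ 12 * M ^ 2 ≤ L ^ 2) ∧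
    -- characterization of the fixed points
    (12 * M ^ 2 ≤ L ^ 2 → ∀ r u : ℝ, 0 < r →
      ((r * u = 0 ∧ r * (L ^ 2 - M * r) - 3 * L ^ 2 * M + (3 / 2) * u ^ 2 = 0) ↔
        (u = 0 ∧ (r = rp ∨ r = rm)))) ∧
    -- center at r₊ : purely imaginary nonzero eigenvalues of !![0, r; L² − 2Mr, 0]
    (12 * M ^ 2 < L ^ 2 →
      (∀ lam : ℂ,
        (Matrix.det (!![(0 : ℂ), (rp : ℝ); ((L ^ 2 - 2 * M * rp : ℝ) : ℂ), 0]
            - lam • (1 : Matrix (Fin 2) (Fin 2) ℂ)) = 0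
          ↔ lam = Complex.I * (Real.sqrt (rp * (2 * M * rp - L ^ 2)) : ℝ) ∨
            lam = -(Complex.I * (Real.sqrt (rp * (2 * M * rp - L ^ 2)) : ℝ)))) ∧
      0 < rp * (2 * M * rp - L ^ 2) ∧
      -- saddle at r₋ : real eigenvalues of opposite sign
      (∀ lam : ℝ,
        (Matrix.det (!![(0 : ℝ), rm; L ^ 2 - 2 * M * rm, 0]
            - lam • (1 : Matrix (Fin 2) (Fin 2) ℝ)) = 0
          ↔ lam = Real.sqrt (rm * (L ^ 2 - 2 * M * rm)) ∨
            lam = -Real.sqrt (rm * (L ^ 2 - 2 * M * rm)))) ∧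
      0 < rm * (L ^ 2 - 2 * M * rm)) := by
  intro rp rm
  refine ⟨Schwarzschild.exists_isFixedPoint_iff hM,
    fun h r u hr => Schwarzschild.isFixedPoint_iff hM h hr, fun h => ?_⟩
  have hcenter : 0 < rp * (2 * M * rp - L ^ 2) := Schwarzschild.rPlus_mul_pos hM h
  have hsaddle : 0 < rm * (L ^ 2 - 2 * M * rm) := Schwarzschild.rMinus_mul_pos hM h
  refine ⟨Matrix.det_antidiag_sub_smul_one_eq_zero_iff ?_, hcenter,
    Matrix.det_antidiag_sub_smul_one_eq_zero_iff (sq_sqrt hsaddle.le).symm, hsaddle⟩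
  rw [mul_pow, Complex.I_sq, ← Complex.ofReal_pow, sq_sqrt hcenter.le]
  push_cast
  ring
end

section
/- For the Reissner–Nordström potential V(r) = −M(L²/r³ + μ/r) + Q²(L²/(2r⁴) + μ/(2r²)) with β = −2, the reduced McGehee system is r' = ru, θ' = Lr, u' = r(r(L² − μMr + μQ²) − 3L²M) + 2(L²Q² + u²), and the quantity L²(r(r−2M)+Q²) + μr²(Q² − 2Mr) + u² − 2r⁴ε is conserved (constant) along solutions for r > 0. -/
/-!
With `β = −2` the McGehee exponents collapse to `r ^ 2` and `r ^ 1`, and clearing the powers of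
`r` in `Λ` is pure algebra. For conservation, write `G(r, u)` for the energy combination without
the `ε` term: along the flow `r' = r u` and the given `u'`, one checks `G' = 4 u G`, which is
exactly the equation satisfied by `c r⁴`; hence `G / r⁴` has zero derivative and `G = 2 ε r⁴`.
-/

theorem exists_eq_mul_pow_of_hasDerivAt {r u G : ℝ → ℝ} (k : ℕ) (hr : ∀ s, r s ≠ 0)
    (hr' : ∀ s, HasDerivAt r (r s * u s) s) (hG : ∀ s, HasDerivAt G (k * u s * G s) s) :
    ∃ c : ℝ, ∀ s, G s = c * r s ^ k := by
  have hquot : ∀ s, HasDerivAt (fun s => G s / r s ^ k) 0 s := by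
    intro s
    refine ((hG s).div ((hr' s).pow k) (pow_ne_zero k (hr s))).congr_deriv ?_
    rcases k with _ | k
    · simp
    · simp only [Pi.pow_apply, Nat.add_sub_cancel, pow_succ]
      ring
  refine ⟨G 0 / r 0 ^ k, fun s => ?_⟩
  have hconst := is_const_of_deriv_eq_zero (fun s => (hquot s).differentiableAt)
    (fun s => (hquot s).deriv) s 0
  rw [← hconst, div_mul_cancel₀ _ (pow_ne_zero k (hr s))]

def rnEnergy (M Q L μ r u : ℝ) : ℝ :=
  L ^ 2 * (r * (r - 2 * M) + Q ^ 2) + μ * r ^ 2 * (Q ^ 2 - 2 * M * r) + u ^ 2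

theorem hasDerivAt_rnEnergy {M Q L μ : ℝ} {r u : ℝ → ℝ} {s : ℝ}
    (hr : HasDerivAt r (r s * u s) s)
    (hu : HasDerivAt u (r s * (r s * (L ^ 2 - μ * M * r s + μ * Q ^ 2) - 3 * L ^ 2 * M)
      + 2 * (L ^ 2 * Q ^ 2 + (u s) ^ 2)) s) :
    HasDerivAt (fun s => rnEnergy M Q L μ (r s) (u s))
      ((4 : ℕ) * u s * rnEnergy M Q L μ (r s) (u s)) s := by
  have hL := ((hr.mul (hr.sub_const (2 * M))).add_const (Q ^ 2)).const_mul (L ^ 2)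
  have hμ := ((hr.pow 2).const_mul μ).mul ((hr.const_mul (2 * M)).const_sub (Q ^ 2))
  refine ((hL.add hμ).add (hu.pow 2)).congr_deriv ?_
  simp only [rnEnergy, Pi.pow_apply]
  push_cast
  ring

theorem mcGehee_rhs_eq {M Q L μ r u : ℝ} {Λ : ℝ → ℝ} (hr : 0 < r)
    (hΛ : Λ r = -3 * M * L ^ 2 / r ^ 5 - μ * M / r ^ 3
        + 2 * Q ^ 2 * L ^ 2 / r ^ 6 + μ * Q ^ 2 / r ^ 4) :
    r ^ (-2 * ((-2 : ℝ) + 1)) * (L ^ 2 + r ^ 4 * Λ r) - (-2 : ℝ) * u ^ 2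
      = r * (r * (L ^ 2 - μ * M * r + μ * Q ^ 2) - 3 * L ^ 2 * M)
        + 2 * (L ^ 2 * Q ^ 2 + u ^ 2) := by
  have hexp : -2 * ((-2 : ℝ) + 1) = (2 : ℕ) := by norm_num
  rw [hexp, Real.rpow_natCast, hΛ]
  field_simp
  ring

theorem reissner_nordstrom_reduced_system_general
    (M Q L μ : ℝ)
    (Λ : ℝ → ℝ)
    (hΛ : ∀ ρ : ℝ, 0 < ρ →
      Λ ρ = -3 * M * L ^ 2 / ρ ^ 5 - μ * M / ρ ^ 3
        + 2 * Q ^ 2 * L ^ 2 / ρ ^ 6 + μ * Q ^ 2 / ρ ^ 4) :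
    -- the reduced McGehee right-hand side with β = −2 takes the stated form
    (∀ r u : ℝ, 0 < r →
      r ^ (-2 * ((-2 : ℝ) + 1)) * (L ^ 2 + r ^ 4 * Λ r) - (-2 : ℝ) * u ^ 2
        = r * (r * (L ^ 2 - μ * M * r + μ * Q ^ 2) - 3 * L ^ 2 * M)
          + 2 * (L ^ 2 * Q ^ 2 + u ^ 2) ∧
      L * r ^ (-((-2 : ℝ) + 1)) = L * r) ∧
    -- conservation of the energy combination
    (∀ r u θ : ℝ → ℝ, (∀ s, 0 < r s) →
      (∀ s, HasDerivAt r (r s * u s) s ∧ HasDerivAt θ (L * r s) s ∧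
        HasDerivAt u (r s * (r s * (L ^ 2 - μ * M * r s + μ * Q ^ 2) - 3 * L ^ 2 * M)
          + 2 * (L ^ 2 * Q ^ 2 + (u s) ^ 2)) s) →
      ∃ ε : ℝ, ∀ s : ℝ,
        L ^ 2 * (r s * (r s - 2 * M) + Q ^ 2) + μ * (r s) ^ 2 * (Q ^ 2 - 2 * M * r s)
          + (u s) ^ 2 - 2 * (r s) ^ 4 * ε = 0) := by
  refine ⟨fun r u hr => ⟨mcGehee_rhs_eq hr (hΛ r hr), ?_⟩, fun r u θ hr hsys => ?_⟩
  · norm_num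
  · obtain ⟨c, hc⟩ := exists_eq_mul_pow_of_hasDerivAt 4 (fun s => (hr s).ne')
      (fun s => (hsys s).1) (fun s => hasDerivAt_rnEnergy (hsys s).1 (hsys s).2.2)
    refine ⟨c / 2, fun s => ?_⟩
    have hs := hc s
    simp only [rnEnergy] at hs
    linarith

/-- For the Reissner–Nordström potential
`V(r) = −M(L²/r³ + μ/r) + Q²(L²/(2r⁴) + μ/(2r²))` with `β = −2`, the reduced McGehee
system is `r' = ru, θ' = Lr, u' = r(r(L² − μMr + μQ²) − 3L²M) + 2(L²Q² + u²)`, and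
`L²(r(r−2M)+Q²) + μr²(Q² − 2Mr) + u² − 2r⁴ε` vanishes identically along solutions for a
suitable energy constant `ε`. -/
theorem reissner_nordstrom_reduced_system
    (M Q L μ : ℝ) (hM : 0 < M) (hμ : μ = -1 ∨ μ = 0 ∨ μ = 1)
    (Λ : ℝ → ℝ)
    (hΛ : ∀ ρ : ℝ, 0 < ρ →
      Λ ρ = -3 * M * L ^ 2 / ρ ^ 5 - μ * M / ρ ^ 3
        + 2 * Q ^ 2 * L ^ 2 / ρ ^ 6 + μ * Q ^ 2 / ρ ^ 4) :
    -- the reduced McGehee right-hand side with β = −2 takes the stated form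
    (∀ r u : ℝ, 0 < r →
      r ^ (-2 * ((-2 : ℝ) + 1)) * (L ^ 2 + r ^ 4 * Λ r) - (-2 : ℝ) * u ^ 2
        = r * (r * (L ^ 2 - μ * M * r + μ * Q ^ 2) - 3 * L ^ 2 * M)
          + 2 * (L ^ 2 * Q ^ 2 + u ^ 2) ∧
      L * r ^ (-((-2 : ℝ) + 1)) = L * r) ∧
    -- conservation of the energy combination
    (∀ r u θ : ℝ → ℝ, (∀ s, 0 < r s) →
      (∀ s, HasDerivAt r (r s * u s) s ∧ HasDerivAt θ (L * r s) s ∧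
        HasDerivAt u (r s * (r s * (L ^ 2 - μ * M * r s + μ * Q ^ 2) - 3 * L ^ 2 * M)
          + 2 * (L ^ 2 * Q ^ 2 + (u s) ^ 2)) s) →
      ∃ ε : ℝ, ∀ s : ℝ,
        L ^ 2 * (r s * (r s - 2 * M) + Q ^ 2) + μ * (r s) ^ 2 * (Q ^ 2 - 2 * M * r s)
          + (u s) ^ 2 - 2 * (r s) ^ 4 * ε = 0) :=
  reissner_nordstrom_reduced_system_general M Q L μ Λ hΛ
end
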